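/- arXiv:1907.12149 — 8 statements merged into one kernel-verified Lean document; each statement's English description precedes it below -/
import Mathlib

section
/- For every finite simple graph G and every r ∈ ℕ, the weak r-coloring number satisfies wcol_r(G) ≤ (scol_r(G))^r. -/
open SimpleGraph

/-- `y` is weakly `r`-reachable from `x` w.r.t. the ordering `le`:
`y ≤ x` and there is an `x,y`-path of length at most `r` all of whose
vertices `z` satisfy `y ≤ z`. -/
def wreach {V : Type*} (G : SimpleGraph V) (le : V → V → Prop) (r : ℕ) (x : V) : Set V :=
  {y | le y x ∧ ∃ p : G.Walk x y, p.IsPath ∧ p.length ≤ r ∧ ∀ z ∈ p.support, le y z}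

/-- `y` is strongly `r`-reachable from `x` w.r.t. the ordering `le`:
`y ≤ x` and there is an `x,y`-path of length at most `r` all of whose
vertices `z ≠ y` satisfy `x ≤ z`. -/
def sreach {V : Type*} (G : SimpleGraph V) (le : V → V → Prop) (r : ℕ) (x : V) : Set V :=
  {y | le y x ∧ ∃ p : G.Walk x y, p.IsPath ∧ p.length ≤ r ∧ ∀ z ∈ p.support, z ≠ y → le x z}

/-- `wcol_r(G, σ)`. -/
noncomputable def wcolOn {V : Type*} [Fintype V] (G : SimpleGraph V)
    (le : V → V → Prop) (r : ℕ) : ℕ :=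
  Finset.univ.sup fun x => Nat.card (wreach G le r x)

/-- `scol_r(G, σ)`. -/
noncomputable def scolOn {V : Type*} [Fintype V] (G : SimpleGraph V)
    (le : V → V → Prop) (r : ℕ) : ℕ :=
  Finset.univ.sup fun x => Nat.card (sreach G le r x)

/-- The weak `r`-coloring number. -/
noncomputable def wcol {V : Type*} [Fintype V] (G : SimpleGraph V) (r : ℕ) : ℕ :=
  ⨅ σ : LinearOrder V, wcolOn G σ.le r

/-- The strong `r`-coloring number. -/
noncomputable def scol {V : Type*} [Fintype V] (G : SimpleGraph V) (r : ℕ) : ℕ :=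
  ⨅ σ : LinearOrder V, scolOn G σ.le r

/-- `col(G, σ)`: one more than the max back-degree. -/
noncomputable def colOn {V : Type*} [Fintype V] (G : SimpleGraph V)
    (lt : V → V → Prop) : ℕ :=
  Finset.univ.sup fun x => 1 + Nat.card {y | G.Adj x y ∧ lt y x}

/-- The coloring number `col(G)`. -/
noncomputable def col {V : Type*} [Fintype V] (G : SimpleGraph V) : ℕ :=
  ⨅ σ : LinearOrder V, colOn G σ.lt


set_option linter.unusedSectionVars false
section Aux

variable {V : Type*}

/-- split a walk at the first vertex violating `Q`. -/
lemma walk_split (G : SimpleGraph V) (Q : V → Prop) :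
    ∀ {x y : V} (p : G.Walk x y), Q x →
      (∀ z ∈ p.support, Q z) ∨
      ∃ (u : V) (p₁ : G.Walk x u) (p₂ : G.Walk u y),
        p = p₁.append p₂ ∧ ¬ Q u ∧ (∀ z ∈ p₁.support, z ≠ u → Q z) ∧ 1 ≤ p₁.length := by
  intro x y p
  induction p with
  | nil =>
    intro hQx
    left
    intro z hz
    simp only [SimpleGraph.Walk.support_nil, List.mem_singleton] at hz
    subst hz; exact hQx
  | @cons a b c h q ih =>
    intro hQa
    by_cases hQb : Q b
    · rcases ih hQb with hall | ⟨u, q₁, q₂, hq, hu, hq₁, hlen⟩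
      · left
        intro z hz
        simp only [SimpleGraph.Walk.support_cons, List.mem_cons] at hz
        rcases hz with rfl | hz
        · exact hQa
        · exact hall z hz
      · right
        refine ⟨u, SimpleGraph.Walk.cons h q₁, q₂, by rw [hq]; rfl, hu, ?_, ?_⟩
        · intro z hz hzu
          simp only [SimpleGraph.Walk.support_cons, List.mem_cons] at hz
          rcases hz with rfl | hz
          · exact hQa
          · exact hq₁ z hz hzu
        · simp [SimpleGraph.Walk.length_cons]
    · right
      refine ⟨b, SimpleGraph.Walk.cons h SimpleGraph.Walk.nil, q, by simp, hQb, ?_, by simp⟩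
      intro z hz hzb
      simp only [SimpleGraph.Walk.support_cons, SimpleGraph.Walk.support_nil,
        List.mem_cons, List.mem_singleton] at hz
      rcases hz with rfl | rfl | hz
      · exact hQa
      · exact absurd rfl hzb
      · simp at hz

variable [Fintype V] [DecidableEq V]

noncomputable def chainT (G : SimpleGraph V) (le : V → V → Prop) (r : ℕ) : ℕ → V → Finset V
  | 0, x => {x}
  | (k+1), x => ((Set.toFinite (sreach G le r x)).toFinset).biUnion (chainT G le r k)

lemma self_mem_sreach (G : SimpleGraph V) {le : V → V → Prop} (hrefl : ∀ v, le v v)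
    (r : ℕ) (x : V) : x ∈ sreach G le r x :=
  ⟨hrefl x, SimpleGraph.Walk.nil, by simp, by simp, by simp⟩

lemma self_mem_chainT (G : SimpleGraph V) {le : V → V → Prop} (hrefl : ∀ v, le v v)
    (r : ℕ) : ∀ (k : ℕ) (x : V), x ∈ chainT G le r k x := by
  intro k
  induction k with
  | zero => intro x; simp [chainT]
  | succ k ih =>
    intro x
    simp only [chainT, Finset.mem_biUnion, Set.Finite.mem_toFinset]
    exact ⟨x, self_mem_sreach G hrefl r x, ih x⟩

lemma chainT_card_le (G : SimpleGraph V) (le : V → V → Prop) (r : ℕ) {s : ℕ}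
    (hs : ∀ v : V, Nat.card (sreach G le r v) ≤ s) :
    ∀ (k : ℕ) (x : V), (chainT G le r k x).card ≤ s ^ k := by
  intro k
  induction k with
  | zero => intro x; simp [chainT]
  | succ k ih =>
    intro x
    calc (chainT G le r (k+1) x).card
        ≤ ∑ u ∈ (Set.toFinite (sreach G le r x)).toFinset, (chainT G le r k u).card :=
          Finset.card_biUnion_le
      _ ≤ ∑ _u ∈ (Set.toFinite (sreach G le r x)).toFinset, s ^ k :=
          Finset.sum_le_sum fun u _ => ih u
      _ = (Set.toFinite (sreach G le r x)).toFinset.card * s ^ k := by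
          rw [Finset.sum_const, smul_eq_mul]
      _ ≤ s * s ^ k := by
          refine Nat.mul_le_mul_right _ ?_
          have := hs x
          rwa [Nat.card_coe_set_eq,
            Set.ncard_eq_toFinset_card _ (Set.toFinite _)] at this
      _ = s ^ (k+1) := by ring

lemma mem_chainT_of_wreach (G : SimpleGraph V) {le : V → V → Prop}
    (hrefl : ∀ v, le v v) (htot : ∀ a b, le a b ∨ le b a) (r : ℕ) :
    ∀ (m : ℕ), m ≤ r → ∀ (x y : V) (p : G.Walk x y), p.IsPath → p.length ≤ m →
      (∀ z ∈ p.support, le y z) → y ∈ chainT G le r m x := by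
  intro m
  induction m with
  | zero =>
    intro _ x y p _ hlen _
    have : x = y := SimpleGraph.Walk.eq_of_length_eq_zero (Nat.le_zero.mp hlen)
    subst this
    simp [chainT]
  | succ m ih =>
    intro hmr x y p hp hlen hsup
    have hyx : le y x := hsup x p.start_mem_support
    rcases walk_split G (fun z => le x z) p (hrefl x) with hall | ⟨u, p₁, p₂, hpe, hu, hq₁, hl1⟩
    · -- y strongly reachable from x
      have hys : y ∈ sreach G le r x :=
        ⟨hyx, p, hp, hlen.trans hmr, fun z hz _ => hall z hz⟩
      simp only [chainT, Finset.mem_biUnion, Set.Finite.mem_toFinset]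
      exact ⟨y, hys, self_mem_chainT G hrefl r m y⟩
    · have hux : le u x := (htot x u).resolve_left hu
      have hp₁ : p₁.IsPath := SimpleGraph.Walk.IsPath.of_append_left (hpe ▸ hp)
      have hp₂ : p₂.IsPath := SimpleGraph.Walk.IsPath.of_append_right (hpe ▸ hp)
      have hlensum : p₁.length + p₂.length = p.length := by
        rw [hpe, SimpleGraph.Walk.length_append]
      have hl₁r : p₁.length ≤ r := by omega
      have hus : u ∈ sreach G le r x := ⟨hux, p₁, hp₁, hl₁r, hq₁⟩
      by_cases huy : u = y
      · subst huy
        simp only [chainT, Finset.mem_biUnion, Set.Finite.mem_toFinset]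
        exact ⟨u, hus, self_mem_chainT G hrefl r m u⟩
      · have hsub : p₂.support ⊆ p.support := by
          rw [hpe]; exact SimpleGraph.Walk.subset_support_append_right _ _
        have hmem : y ∈ chainT G le r m u :=
          ih (by omega) u y p₂ hp₂ (by omega) (fun z hz => hsup z (hsub hz))
        simp only [chainT, Finset.mem_biUnion, Set.Finite.mem_toFinset]
        exact ⟨u, hus, hmem⟩

end Aux

lemma wcolOn_le_scolOn_pow {V : Type*} [Fintype V] (G : SimpleGraph V)
    (σ : LinearOrder V) (r : ℕ) :
    wcolOn G σ.le r ≤ (scolOn G σ.le r) ^ r := by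
  classical
  set s := scolOn G σ.le r with hs_def
  have hs : ∀ v : V, Nat.card (sreach G σ.le r v) ≤ s := fun v =>
    Finset.le_sup (f := fun x => Nat.card (sreach G σ.le r x)) (Finset.mem_univ v)
  apply Finset.sup_le
  intro x _
  have hsub : wreach G σ.le r x ⊆ ↑(chainT G σ.le r r x) := by
    rintro y ⟨hyx, p, hp, hl, hsup⟩
    exact_mod_cast mem_chainT_of_wreach G (fun v => le_refl v) (fun a b => le_total a b)
      r r le_rfl x y p hp hl hsup
  calc Nat.card (wreach G σ.le r x)
      ≤ Nat.card (↑(chainT G σ.le r r x) : Set V) :=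
        Nat.card_mono (Set.toFinite _) hsub
    _ = (chainT G σ.le r r x).card := by
        rw [Nat.card_coe_set_eq, Set.ncard_coe_finset]
    _ ≤ s ^ r := chainT_card_le G σ.le r hs r x

/-- `wcol_r(G) ≤ (scol_r(G))^r`. -/
theorem wcol_le_scol_pow {V : Type*} [Fintype V] (G : SimpleGraph V) (r : ℕ) :
    wcol G r ≤ (scol G r) ^ r := by
  have hne : Nonempty (LinearOrder V) :=
    ⟨LinearOrder.lift' (Fintype.equivFin V) (Fintype.equivFin V).injective⟩
  obtain ⟨σ, hσ⟩ := Nat.sInf_mem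
    (Set.range_nonempty (fun σ : LinearOrder V => scolOn G σ.le r))
  have h1 : wcol G r ≤ wcolOn G σ.le r :=
    Nat.sInf_le ⟨σ, rfl⟩
  have h2 : scolOn G σ.le r = scol G r := hσ
  calc wcol G r ≤ wcolOn G σ.le r := h1
    _ ≤ (scolOn G σ.le r) ^ r := wcolOn_le_scolOn_pow G σ r
    _ = (scol G r) ^ r := by rw [h2]
end

section
/- For every finite simple graph G, if the vertices of G are colored greedily along an ordering σ so that each vertex v receives a color distinct from all colors of vertices in S_2[G,σ,v] \ {v}, then whenever two vertices u,v with u strongly 2-reachable from v receive distinct colors, the resulting proper coloring has no bicolored cycle; hence the acyclic chromatic number satisfies χ_a(G) ≤ scol_2(G). -/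
open SimpleGraph

/-!
Colour the vertices greedily along an ordering `σ` attaining `scol_2(G)`, giving each `v` a colour
not used on `S_2[G, σ, v] \ {v}`; this needs at most `scol_2(G)` colours. Adjacent vertices, and two
vertices with a common neighbour larger than both, lie in one another's `S_2`, so they get distinct
colours. Now a cycle inside two colour classes would have a `σ`-maximal vertex `v` whose two cycle
neighbours are smaller than `v` and coloured differently from `v`, hence coloured alike: impossible.
-/

section Greedy

variable {V : Type*} [LinearOrder V]

theorem exists_greedy_coloring [Finite V] (R : V → V → Prop) {k : ℕ}
    (hk : ∀ v, {u | u < v ∧ R u v}.ncard < k) :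
    ∃ C : V → Fin k, ∀ u v, u < v → R u v → C u ≠ C v := by
  classical
  have := Fintype.ofFinite V
  suffices ∀ s : Finset V, ∃ C : V → Fin k, ∀ v ∈ s, ∀ u, u < v → R u v → C u ≠ C v by
    obtain ⟨C, hC⟩ := this Finset.univ
    exact ⟨C, fun u v huv hR => hC v (Finset.mem_univ v) u huv hR⟩
  intro s
  induction s using Finset.induction_on_max with
  | empty => exact ⟨fun v => ⟨0, (Nat.zero_le _).trans_lt (hk v)⟩, by simp⟩
  | insert a s has ih =>
    obtain ⟨C, hC⟩ := ih
    set earlier := Finset.univ.filter fun u => u < a ∧ R u a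
    obtain ⟨c, -, hc⟩ : ∃ c, c ∈ Finset.univ ∧ c ∉ earlier.image C := by
      refine Finset.exists_mem_notMem_of_card_lt_card ?_
      calc (earlier.image C).card ≤ earlier.card := Finset.card_image_le
        _ = {u | u < a ∧ R u a}.ncard := by rw [← Set.ncard_coe_finset]; simp [earlier]
        _ < k := hk a
        _ = _ := (Finset.card_fin k).symm
    refine ⟨Function.update C a c, fun v hv u huv hR => ?_⟩
    have hua : u ≠ a := by
      rintro rfl
      rcases Finset.mem_insert.mp hv with rfl | hv
      exacts [huv.false, (huv.trans (has v hv)).false]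
    rw [Function.update_of_ne hua]
    rcases Finset.mem_insert.mp hv with rfl | hv
    · rw [Function.update_self]
      exact fun h => hc (Finset.mem_image.mpr ⟨u, by simp [earlier, huv, hR], h⟩)
    · rw [Function.update_of_ne (has v hv).ne]
      exact hC v hv u huv hR

end Greedy

namespace SimpleGraph

variable {V : Type*} {G : SimpleGraph V}

lemma card_sreach_le_scolOn [Fintype V] (G : SimpleGraph V) (le : V → V → Prop) (r : ℕ)
    (v : V) :
    Nat.card (sreach G le r v) ≤ scolOn G le r :=
  Finset.le_sup (f := fun x => Nat.card (sreach G le r x)) (Finset.mem_univ v)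

lemma exists_scolOn_eq_scol [Fintype V] (G : SimpleGraph V) (r : ℕ) :
    ∃ σ : LinearOrder V, scolOn G σ.le r = scol G r :=
  have : Nonempty (LinearOrder V) :=
    ⟨LinearOrder.lift' (Fintype.equivFin V) (Fintype.equivFin V).injective⟩
  ciInf_mem fun σ : LinearOrder V => scolOn G σ.le r

section LinearOrder

variable [LinearOrder V]

lemma self_mem_sreach (r : ℕ) (v : V) : v ∈ sreach G (· ≤ ·) r v :=
  ⟨le_rfl, .nil, .nil, r.zero_le, by simp⟩

lemma mem_sreach_of_adj {r : ℕ} (hr : 1 ≤ r) {x y : V} (hxy : G.Adj x y) (hyx : y ≤ x) :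
    y ∈ sreach G (· ≤ ·) r x :=
  ⟨hyx, hxy.toWalk, by simp [hxy.ne], by simpa using hr, by simp⟩

lemma mem_sreach_of_adj_of_adj {r : ℕ} (hr : 2 ≤ r) {x v y : V} (hxv : G.Adj x v)
    (hvy : G.Adj v y) (hxy : x ≠ y) (hyx : y ≤ x) (hxv_le : x ≤ v) :
    y ∈ sreach G (· ≤ ·) r x := by
  refine ⟨hyx, .cons hxv (.cons hvy .nil), ?_, by simpa using hr, ?_⟩
  · simp [hxv.ne, hvy.ne, hxy]
  · simp only [Walk.support_cons, Walk.support_nil, List.mem_cons, List.not_mem_nil, or_false]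
    rintro z (rfl | rfl | rfl) hzy
    exacts [le_rfl, hxv_le, absurd rfl hzy]

lemma Walk.IsCycle.exists_adj_adj_lt {x : V} {c : G.Walk x x} (hc : c.IsCycle) :
    ∃ v u w, G.Adj v u ∧ G.Adj v w ∧ u ≠ w ∧ u < v ∧ w < v := by
  classical
  -- `v` is the maximum of the cycle; `u` and `w` are its two neighbours on it.
  obtain ⟨v, hv, hmax⟩ : ∃ v ∈ c.support, ∀ z ∈ c.support, z ≤ v :=
    ⟨c.support.toFinset.max' ⟨x, by simp⟩, List.mem_toFinset.mp (Finset.max'_mem _ _),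
      fun z hz => Finset.le_max' _ z (by simpa using hz)⟩
  have hc' := hc.rotate hv
  have hlt : ∀ z ∈ (c.rotate v hv).support, G.Adj v z → z < v := fun z hz hvz =>
    (hmax z ((Walk.mem_support_rotate_iff _ _ _).mp hz)).lt_of_ne hvz.ne'
  have hnil := hc'.not_nil
  refine ⟨v, _, _, Walk.adj_snd hnil, (Walk.adj_penultimate hnil).symm,
    hc'.snd_ne_penultimate, hlt _ ?_ (Walk.adj_snd hnil), hlt _ ?_ (Walk.adj_penultimate hnil).symm⟩
  all_goals exact Walk.getVert_mem_support _ _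

lemma isAcyclic_of_forall_adj_adj_lt
    (h : ∀ v u w, G.Adj v u → G.Adj v w → u < v → w < v → u = w) :
    G.IsAcyclic := fun _ _ hc =>
  let ⟨v, u, w, hvu, hvw, huw, hu, hw⟩ := hc.exists_adj_adj_lt
  huw (h v u w hvu hvw hu hw)

theorem exists_coloring_of_card_sreach_two_le [Finite V] {k : ℕ}
    (hk : ∀ v, Nat.card (sreach G (· ≤ ·) 2 v) ≤ k) :
    ∃ C : V → Fin k, (∀ u v, G.Adj u v → C u ≠ C v) ∧
      ∀ v u w, G.Adj v u → G.Adj v w → u ≠ w → u < v → w < v → C u ≠ C w := by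
  obtain ⟨C, hC⟩ := exists_greedy_coloring (fun u v => u ∈ sreach G (· ≤ ·) 2 v) fun v =>
    calc {u | u < v ∧ u ∈ sreach G (· ≤ ·) 2 v}.ncard < (sreach G (· ≤ ·) 2 v).ncard :=
          Set.ncard_lt_ncard ⟨fun u hu => hu.2, fun h => lt_irrefl v (h (self_mem_sreach 2 v)).1⟩
      _ ≤ k := hk v
  refine ⟨C, fun u v huv => ?_, fun v u w hvu hvw huw hu hw => ?_⟩
  · rcases lt_or_gt_of_ne huv.ne with h | h
    · exact hC u v h (mem_sreach_of_adj one_le_two huv.symm h.le)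
    · exact (hC v u h (mem_sreach_of_adj one_le_two huv h.le)).symm
  · rcases lt_or_gt_of_ne huw with h | h
    · exact hC u w h (mem_sreach_of_adj_of_adj le_rfl hvw.symm hvu huw.symm h.le hw.le)
    · exact (hC w u h (mem_sreach_of_adj_of_adj le_rfl hvu.symm hvw huw h.le hu.le)).symm

theorem isAcyclic_induce_of_coloring {α : Type*} {C : V → α}
    (hadj : ∀ u v, G.Adj u v → C u ≠ C v)
    (hpath : ∀ v u w, G.Adj v u → G.Adj v w → u ≠ w → u < v → w < v → C u ≠ C w) (c₁ c₂ : α) :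
    (G.induce {v | C v = c₁ ∨ C v = c₂}).IsAcyclic :=
  isAcyclic_of_forall_adj_adj_lt fun v u w hvu hvw hu hw => by
    by_contra huw
    have huw' := hpath v u w hvu hvw (Subtype.coe_injective.ne huw) hu hw
    have hvu' := hadj _ _ hvu
    have hvw' := hadj _ _ hvw
    -- `u` and `w` both avoid the colour of `v`, so with two colours available they share one.
    rcases u with ⟨u, hcu | hcu⟩ <;> rcases v with ⟨v, hcv | hcv⟩ <;>
      rcases w with ⟨w, hcw | hcw⟩ <;> simp_all

end LinearOrder

end SimpleGraph

/-- the acyclic chromatic number is at most `scol_2(G)`: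
there is a proper coloring with `scol_2(G)` colors in which the union of
any two color classes induces a forest. -/
theorem acyclic_chromatic_le_scol_two {V : Type*} [Fintype V] (G : SimpleGraph V) :
    ∃ C : V → Fin (scol G 2),
      (∀ u v, G.Adj u v → C u ≠ C v) ∧
      ∀ c₁ c₂ : Fin (scol G 2),
        (G.induce {v | C v = c₁ ∨ C v = c₂}).IsAcyclic := by
  obtain ⟨σ, hσ⟩ := G.exists_scolOn_eq_scol 2
  let := σ
  obtain ⟨C, hadj, hpath⟩ := exists_coloring_of_card_sreach_two_le (G := G) fun v =>
    (card_sreach_le_scolOn G σ.le 2 v).trans_eq hσ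
  exact ⟨C, hadj, isAcyclic_induce_of_coloring hadj hpath⟩
end

section
/- For every finite simple graph G, the star chromatic number satisfies χ_s(G) ≤ wcol_2(G): coloring greedily so that each vertex v gets a color different from all vertices in W_2[G,σ,v] \ {v} yields a proper coloring with no bicolored path on four vertices. -/
open SimpleGraph

/-!
Order the vertices by an ordering attaining `wcol_2(G)` and colour them greedily along it, giving
`v` a colour not used on `W_2[v] \ {v}`, which has fewer than `wcol_2(G)` elements. Adjacent
vertices are then coloured differently, and so are the ends of any path `x - y - z` whose middle
vertex is not its minimum. In a path `a - b - c - d` one of `a - b - c`, `b - c - d` is of that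
kind, so the path cannot be two-coloured.
-/

section WeakReach

variable {V : Type*} [LinearOrder V] (G : SimpleGraph V)

lemma self_mem_wreach (r : ℕ) (v : V) : v ∈ wreach G (· ≤ ·) r v :=
  ⟨le_rfl, .nil, by simp⟩

lemma mem_wreach_of_adj {r : ℕ} (hr : 1 ≤ r) {u v : V} (huv : u ≤ v) (hadj : G.Adj v u) :
    u ∈ wreach G (· ≤ ·) r v := by
  refine ⟨huv, hadj.toWalk, by simp [hadj.ne], by simpa using hr, ?_⟩
  simp [huv]

lemma mem_wreach_of_adj_adj {r : ℕ} (hr : 2 ≤ r) {u v w : V} (huv : u ≤ v) (huw : u ≤ w)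
    (hvw : G.Adj v w) (hwu : G.Adj w u) (hvu : v ≠ u) : u ∈ wreach G (· ≤ ·) r v := by
  refine ⟨huv, .cons hvw hwu.toWalk, ?_, by simpa using hr, ?_⟩
  · simp [Walk.cons_isPath_iff, hwu.ne, hvw.ne, hvu]
  · simp [huv, huw]

end WeakReach

section StarColoring

variable {V α : Type*} [LinearOrder V] {G : SimpleGraph V} {C : V → α}

variable (G) in
def SeparatesWReachTwo (C : V → α) : Prop :=
  ∀ v, ∀ u ∈ wreach G (· ≤ ·) 2 v, u ≠ v → C u ≠ C v

lemma SeparatesWReachTwo.ne_of_adj (hC : SeparatesWReachTwo G C) {u v : V} (huv : G.Adj u v) :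
    C u ≠ C v := by
  rcases le_total u v with h | h
  · exact hC v u (mem_wreach_of_adj G one_le_two h huv.symm) huv.ne
  · exact (hC u v (mem_wreach_of_adj G one_le_two h huv) huv.ne').symm

/-- The smaller end of the path lies in `W_2` of the larger one. -/
lemma SeparatesWReachTwo.ne_of_adj_adj (hC : SeparatesWReachTwo G C)
    {x y z : V} (hxy : G.Adj x y) (hyz : G.Adj y z) (hxz : x ≠ z) (hy : min x z ≤ y) :
    C x ≠ C z := by
  rcases le_total x z with h | h
  · rw [min_eq_left h] at hy
    exact hC z x (mem_wreach_of_adj_adj G le_rfl h hy hyz.symm hxy.symm hxz.symm) hxz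
  · rw [min_eq_right h] at hy
    exact (hC x z (mem_wreach_of_adj_adj G le_rfl h hy hxy hyz hxz) hxz.symm).symm

lemma eq_of_ne_of_ne_of_mem_pair {x y z c₁ c₂ : α} (hx : x = c₁ ∨ x = c₂)
    (hy : y = c₁ ∨ y = c₂) (hz : z = c₁ ∨ z = c₂) (hxy : x ≠ y) (hyz : y ≠ z) : x = z := by
  rcases hx with rfl | rfl <;> rcases hy with rfl | rfl <;> rcases hz with rfl | rfl <;>
    simp_all

lemma SeparatesWReachTwo.not_two_colored_path (hC : SeparatesWReachTwo G C)
    {u v : V} (p : G.Walk u v) (hp : p.IsPath) (hlen : p.length = 3) :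
    ¬ ∃ c₁ c₂ : α, ∀ z ∈ p.support, C z = c₁ ∨ C z = c₂ := by
  rintro ⟨c₁, c₂, hcol⟩
  have hadj (i : ℕ) (hi : i < 3) : G.Adj (p.getVert i) (p.getVert (i + 1)) :=
    p.adj_getVert_succ (hlen ▸ hi)
  have hne {i j : ℕ} (hi : i ≤ 3) (hj : j ≤ 3) (hij : i ≠ j) : p.getVert i ≠ p.getVert j :=
    fun h => hij (hp.getVert_injOn (by simpa [hlen]) (by simpa [hlen]) h)
  have hcol' (i : ℕ) := hcol _ (p.getVert_mem_support i)
  have hproper (i : ℕ) (hi : i < 3) := hC.ne_of_adj (hadj i hi)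
  rcases le_total (p.getVert 1) (p.getVert 2) with h | h
  · refine hC.ne_of_adj_adj (hadj 1 (by lia)) (hadj 2 (by lia))
      (hne (by lia) le_rfl (by lia)) (min_le_of_left_le h) ?_
    exact eq_of_ne_of_ne_of_mem_pair (hcol' 1) (hcol' 2) (hcol' 3) (hproper 1 (by lia))
      (hproper 2 (by lia))
  · refine hC.ne_of_adj_adj (hadj 0 (by lia)) (hadj 1 (by lia))
      (hne (by lia) (by lia) (by lia)) (min_le_of_right_le h) ?_
    exact eq_of_ne_of_ne_of_mem_pair (hcol' 0) (hcol' 1) (hcol' 2) (hproper 0 (by lia))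
      (hproper 1 (by lia))

end StarColoring

lemma exists_coloring_ne_of_lt {V α : Type*} [Preorder V] [WellFoundedLT V] [Fintype α]
    (S : V → Finset V) (hS : ∀ v, ∀ u ∈ S v, u < v) (hcard : ∀ v, (S v).card < Fintype.card α) :
    ∃ C : V → α, ∀ v, ∀ u ∈ S v, C u ≠ C v := by
  classical
  have hfree (v : V) (prev : ∀ u, u < v → α) :
      ∃ c, c ∉ (S v).attach.image fun u => prev u.1 (hS v u.1 u.2) :=
    have hlt : ((S v).attach.image fun u => prev u.1 (hS v u.1 u.2)).card < Finset.univ.card :=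
      Finset.card_image_le.trans_lt (by simpa using hcard v)
    (Finset.exists_mem_notMem_of_card_lt_card hlt).imp fun _ h => h.2
  let C : V → α := WellFoundedLT.fix fun v prev => (hfree v prev).choose
  refine ⟨C, fun v u hu => ?_⟩
  have hv := (hfree v fun u _ => C u).choose_spec
  rw [show C v = (hfree v fun u _ => C u).choose from WellFoundedLT.fix_eq _ v]
  exact fun h => hv (Finset.mem_image.2 ⟨⟨u, hu⟩, Finset.mem_attach _ _, h⟩)

lemma exists_linearOrder_wcolOn_eq_wcol {V : Type*} [Fintype V] (G : SimpleGraph V) (r : ℕ) :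
    ∃ σ : LinearOrder V, wcolOn G σ.le r = wcol G r :=
  have : Nonempty (LinearOrder V) :=
    ⟨LinearOrder.lift' _ (Fintype.equivFin V).injective⟩
  Nat.sInf_mem (Set.range_nonempty _)

lemma ncard_wreach_le_wcolOn {V : Type*} [Fintype V] (G : SimpleGraph V)
    (le : V → V → Prop) (r : ℕ) (v : V) : (wreach G le r v).ncard ≤ wcolOn G le r := by
  rw [← Nat.card_coe_set_eq]
  exact Finset.le_sup (f := fun x => Nat.card (wreach G le r x)) (Finset.mem_univ v)

/-- the star chromatic number is at most `wcol_2(G)`: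
there is a proper coloring with `wcol_2(G)` colors in which no path on
four vertices receives only two colors. -/
theorem star_chromatic_le_wcol_two {V : Type*} [Fintype V] (G : SimpleGraph V) :
    ∃ C : V → Fin (wcol G 2),
      (∀ u v, G.Adj u v → C u ≠ C v) ∧
      ∀ (u v : V) (p : G.Walk u v), p.IsPath → p.length = 3 →
        ¬ ∃ c₁ c₂ : Fin (wcol G 2), ∀ z ∈ p.support, C z = c₁ ∨ C z = c₂ := by
  obtain ⟨σ, hσ⟩ := exists_linearOrder_wcolOn_eq_wcol G 2
  let := σ
  let S (v : V) : Finset V := (Set.toFinite (wreach G (· ≤ ·) 2 v \ {v})).toFinset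
  have hS (v : V) : ∀ u ∈ S v, u < v := by
    simp only [S, Set.Finite.mem_toFinset, Set.mem_sdiff, Set.mem_singleton_iff]
    exact fun u hu => lt_of_le_of_ne hu.1.1 hu.2
  have hcard (v : V) : (S v).card < Fintype.card (Fin (wcol G 2)) := by
    rw [← Set.ncard_eq_toFinset_card, Fintype.card_fin, ← hσ]
    exact (Set.ncard_sdiff_singleton_lt_of_mem (self_mem_wreach G 2 v) (Set.toFinite _)).trans_le
      (ncard_wreach_le_wcolOn G _ 2 v)
  obtain ⟨C, hC⟩ := exists_coloring_ne_of_lt S hS hcard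
  have hsep : SeparatesWReachTwo G C :=
    fun v u hu hne => hC v u (by simpa [S] using ⟨hu, hne⟩)
  exact ⟨C, fun u v => hsep.ne_of_adj,
    fun u v p => hsep.not_two_colored_path p⟩
end

section
/- Let G_1, …, G_k be finite simple graphs on a common finite vertex set V, let a_1, …, a_k and r_1, …, r_k be positive integers, and set A = a_1 + ⋯ + a_k. Then there exists a linear ordering σ* of V such that for all i ∈ {1,…,k}, scol_{r_i}(G_i, σ*) ≤ (A/a_i)·(wcol_{2r_i}(G_i))² + wcol_{2r_i}(G_i). -/
open SimpleGraph

set_option linter.unusedSectionVars false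
set_option linter.unusedVariables false

section Helpers

variable {V : Type*} [Fintype V]

lemma wreach_mono (G : SimpleGraph V) (le : V → V → Prop) {r r' : ℕ} (h : r ≤ r') (x : V) :
    wreach G le r x ⊆ wreach G le r' x := by
  rintro y ⟨h1, p, hp, hl, hs⟩
  exact ⟨h1, p, hp, hl.trans h, hs⟩

lemma self_mem_wreach_s10 (G : SimpleGraph V) (σ : LinearOrder V) (r : ℕ) (x : V) :
    x ∈ wreach G σ.le r x := by
  refine ⟨σ.le_refl x, (Walk.nil : G.Walk x x), Walk.IsPath.nil, by simp, ?_⟩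
  intro z hz
  simp only [Walk.support_nil, List.mem_singleton] at hz
  subst hz; exact σ.le_refl z

lemma ncard_wreach_le (G : SimpleGraph V) (σ : LinearOrder V) {r r' : ℕ} (h : r ≤ r') (x : V) :
    Nat.card (wreach G σ.le r x) ≤ wcolOn G σ.le r' := by
  calc Nat.card (wreach G σ.le r x) ≤ Nat.card (wreach G σ.le r' x) := by
        rw [Nat.card_coe_set_eq, Nat.card_coe_set_eq]
        exact Set.ncard_le_ncard (wreach_mono G σ.le h x) (Set.toFinite _)
    _ ≤ wcolOn G σ.le r' := by
        unfold wcolOn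
        exact Finset.le_sup (f := fun v => Nat.card (wreach G σ.le r' v)) (Finset.mem_univ x)

lemma exists_wcolOn_eq (G : SimpleGraph V) (r : ℕ) :
    ∃ σ : LinearOrder V, wcolOn G σ.le r = wcol G r := by
  have hne : Nonempty (LinearOrder V) :=
    ⟨LinearOrder.lift' (⇑(Fintype.equivFin V)) (Fintype.equivFin V).injective⟩
  have hmem : wcol G r ∈ Set.range (fun σ : LinearOrder V => wcolOn G σ.le r) :=
    Nat.sInf_mem (Set.range_nonempty _)
  obtain ⟨σ, hσ⟩ := hmem
  exact ⟨σ, hσ⟩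

lemma averaging {k : ℕ} [DecidableEq V] (a : Fin k → ℕ) (ha : ∀ i, 0 < a i)
    (P : Fin k → V → V → Prop) [∀ i x y, Decidable (P i x y)] (w : Fin k → ℕ)
    (U : Finset V) (hU : U.Nonempty)
    (hw : ∀ i, ∀ y ∈ U, (U.filter (fun x => P i x y)).card ≤ w i) :
    ∃ x ∈ U, ∀ i, a i * (U.filter (fun y => P i x y)).card ≤ (∑ j, a j) * w i := by
  have hUcard : 0 < U.card := Finset.card_pos.mpr hU
  by_contra hcon
  push_neg at hcon
  set A := ∑ j, a j with hA
  -- k is nonempty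
  obtain ⟨x₀, hx₀⟩ := hU
  obtain ⟨i₀, -⟩ := hcon x₀ hx₀
  haveI : Nonempty (Fin k) := ⟨i₀⟩
  set Ui : Fin k → Finset V :=
    fun i => U.filter (fun x => A * w i < a i * (U.filter (fun y => P i x y)).card) with hUi
  have hcover : U ⊆ Finset.univ.biUnion Ui := by
    intro x hx
    obtain ⟨i, hi⟩ := hcon x hx
    exact Finset.mem_biUnion.mpr ⟨i, Finset.mem_univ i, Finset.mem_filter.mpr ⟨hx, hi⟩⟩
  have hcnt : ∀ i, ∑ x ∈ U, (U.filter (fun y => P i x y)).card ≤ U.card * w i := by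
    intro i
    calc ∑ x ∈ U, (U.filter (fun y => P i x y)).card
        = ∑ y ∈ U, (U.filter (fun x => P i x y)).card := by
          simp only [Finset.card_filter]
          rw [Finset.sum_comm]
      _ ≤ ∑ _y ∈ U, w i := Finset.sum_le_sum (hw i)
      _ = U.card * w i := by rw [Finset.sum_const, smul_eq_mul]
  have hUicard : ∀ i, A * (Ui i).card < a i * U.card := by
    intro i
    rcases (Ui i).eq_empty_or_nonempty with he | hne
    · rw [he]
      simpa using Nat.mul_pos (ha i) hUcard
    · have h1 : A * w i * (Ui i).card < a i * ∑ x ∈ Ui i, (U.filter (fun y => P i x y)).card := by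
        calc A * w i * (Ui i).card = ∑ _x ∈ Ui i, A * w i := by
              rw [Finset.sum_const, smul_eq_mul, mul_comm]
          _ < ∑ x ∈ Ui i, a i * (U.filter (fun y => P i x y)).card := by
              refine Finset.sum_lt_sum_of_nonempty hne ?_
              intro x hx
              exact (Finset.mem_filter.mp hx).2
          _ = a i * ∑ x ∈ Ui i, (U.filter (fun y => P i x y)).card := by
              rw [Finset.mul_sum]
      have h2 : a i * ∑ x ∈ Ui i, (U.filter (fun y => P i x y)).card
          ≤ a i * (U.card * w i) := by
        refine Nat.mul_le_mul_left _ ?_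
        calc ∑ x ∈ Ui i, (U.filter (fun y => P i x y)).card
            ≤ ∑ x ∈ U, (U.filter (fun y => P i x y)).card :=
              Finset.sum_le_sum_of_subset (Finset.filter_subset _ _)
          _ ≤ U.card * w i := hcnt i
      have h3 : A * (Ui i).card * w i < a i * U.card * w i := by
        calc A * (Ui i).card * w i = A * w i * (Ui i).card := by ring
          _ < a i * ∑ x ∈ Ui i, (U.filter (fun y => P i x y)).card := h1
          _ ≤ a i * (U.card * w i) := h2
          _ = a i * U.card * w i := by ring
      exact Nat.lt_of_mul_lt_mul_right h3
  have hfinal : A * U.card < A * U.card := by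
    calc A * U.card ≤ A * ∑ i, (Ui i).card := by
          refine Nat.mul_le_mul_left _ ?_
          calc U.card ≤ (Finset.univ.biUnion Ui).card := Finset.card_le_card hcover
            _ ≤ ∑ i, (Ui i).card := Finset.card_biUnion_le
      _ = ∑ i, A * (Ui i).card := by rw [Finset.mul_sum]
      _ < ∑ i, a i * U.card := Finset.sum_lt_sum_of_nonempty Finset.univ_nonempty
          (fun i _ => hUicard i)
      _ = A * U.card := by rw [← Finset.sum_mul]
  exact absurd hfinal (lt_irrefl _)

end Helpers

section BuildList

variable {V : Type*} [Fintype V] [DecidableEq V]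

lemma exists_goodList {k : ℕ} (G : Fin k → SimpleGraph V) (a r w : Fin k → ℕ)
    (L : Fin k → LinearOrder V) (ha : ∀ i, 0 < a i)
    [∀ i x y, Decidable (x ∈ wreach (G i) (L i).le (r i) y)]
    (hwc : ∀ i x, Nat.card (wreach (G i) (L i).le (r i) x) ≤ w i)
    (U : Finset V) :
    ∃ l : List V, l.Nodup ∧ l.toFinset = U ∧
      ∀ (j : ℕ) (hj : j < l.length) (i : Fin k),
        a i * Nat.card {y : V | y ∈ l.drop j ∧ l[j] ∈ wreach (G i) (L i).le (r i) y}
          ≤ (∑ j', a j') * w i := by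
  induction U using Finset.strongInduction with
  | _ U ih =>
    rcases U.eq_empty_or_nonempty with he | hU
    · refine ⟨[], List.nodup_nil, by simp [he], ?_⟩
      intro j hj i
      simp at hj
    · -- find a good vertex
      have hfilter : ∀ i, ∀ y ∈ U,
          (U.filter (fun x => x ∈ wreach (G i) (L i).le (r i) y)).card ≤ w i := by
        intro i y _
        calc (U.filter (fun x => x ∈ wreach (G i) (L i).le (r i) y)).card
            = (↑(U.filter (fun x => x ∈ wreach (G i) (L i).le (r i) y)) : Set V).ncard := by
              rw [Set.ncard_coe_finset]
          _ ≤ (wreach (G i) (L i).le (r i) y).ncard := by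
              refine Set.ncard_le_ncard ?_ (Set.toFinite _)
              intro v hv
              simp only [Finset.coe_filter, Set.mem_setOf_eq] at hv
              exact hv.2
          _ = Nat.card (wreach (G i) (L i).le (r i) y) := (Nat.card_coe_set_eq _).symm
          _ ≤ w i := hwc i y
      obtain ⟨x, hxU, hxgood⟩ := averaging a ha
        (fun i x y => x ∈ wreach (G i) (L i).le (r i) y) w U hU hfilter
      obtain ⟨l', hnd', htf', hinv'⟩ := ih (U.erase x) (Finset.erase_ssubset hxU)
      have htfU : (x :: l').toFinset = U := by
        rw [List.toFinset_cons, htf', Finset.insert_erase hxU]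
      refine ⟨x :: l', ?_, htfU, ?_⟩
      · refine List.nodup_cons.mpr ⟨?_, hnd'⟩
        intro hmem
        have : x ∈ U.erase x := htf' ▸ List.mem_toFinset.mpr hmem
        exact (Finset.notMem_erase x U) this
      · intro j hj i
        match j with
        | 0 =>
          have hset : {y : V | y ∈ (x :: l').drop 0 ∧
                (x :: l')[0] ∈ wreach (G i) (L i).le (r i) y}
              = ↑(U.filter (fun y => x ∈ wreach (G i) (L i).le (r i) y)) := by
            ext y
            simp only [List.drop_zero, List.getElem_cons_zero, Set.mem_setOf_eq,
              Finset.coe_filter, ← htfU, List.mem_toFinset]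
          rw [hset, Nat.card_coe_set_eq, Set.ncard_coe_finset]
          exact hxgood i
        | (j' + 1) =>
          have hset : {y : V | y ∈ (x :: l').drop (j' + 1) ∧
                (x :: l')[j' + 1] ∈ wreach (G i) (L i).le (r i) y}
              = {y : V | y ∈ l'.drop j' ∧
                  l'[j']'(by simpa using hj) ∈ wreach (G i) (L i).le (r i) y} := by
            rw [List.drop_succ_cons, List.getElem_cons_succ]
          rw [hset]
          exact hinv' j' (by simpa using hj) i

end BuildList



/-- the main technical theorem. -/
theorem main_technical {V : Type*} [Fintype V] (k : ℕ)
    (G : Fin k → SimpleGraph V) (a r : Fin k → ℕ)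
    (ha : ∀ i, 0 < a i) (hr : ∀ i, 0 < r i) :
    ∃ σ : LinearOrder V, ∀ i,
      (scolOn (G i) σ.le (r i) : ℝ) ≤
        ((∑ j, a j : ℕ) : ℝ) / (a i : ℝ) * (wcol (G i) (2 * r i) : ℝ) ^ 2
          + (wcol (G i) (2 * r i) : ℝ) := by
  classical
  obtain ⟨L, hL⟩ : ∃ L : Fin k → LinearOrder V,
      ∀ i, wcolOn (G i) (L i).le (2 * r i) = wcol (G i) (2 * r i) := by
    choose L hL using fun i => exists_wcolOn_eq (G i) (2 * r i)
    exact ⟨L, hL⟩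
  set w : Fin k → ℕ := fun i => wcol (G i) (2 * r i) with hwdef
  set A : ℕ := ∑ j, a j with hAdef
  have hwc : ∀ i x, Nat.card (wreach (G i) (L i).le (r i) x) ≤ w i := by
    intro i x
    have h2 := ncard_wreach_le (G i) (L i) (show r i ≤ 2 * r i by omega) x
    rw [hL i] at h2
    exact h2
  obtain ⟨l, hnd, htf, hinv⟩ := exists_goodList G a r w L ha hwc Finset.univ
  have hmeml : ∀ v : V, v ∈ l := by
    intro v
    rw [← List.mem_toFinset, htf]
    exact Finset.mem_univ v
  set idx : V → ℕ := fun v => l.idxOf v with hidxdef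
  have hidx : ∀ v : V, idx v < l.length :=
    fun v => List.idxOf_lt_length_iff.mpr (hmeml v)
  have hgetidx : ∀ v : V, l[idx v]'(hidx v) = v :=
    fun v => List.getElem_idxOf (hidx v)
  have hinj : Function.Injective (fun v : V => OrderDual.toDual (idx v)) := by
    intro u v huv
    have h3 : idx u = idx v := OrderDual.toDual.injective huv
    rw [← hgetidx u, ← hgetidx v]
    congr 1
  set σ : LinearOrder V := LinearOrder.lift' _ hinj with hσdef
  have hσle : ∀ u v : V, σ.le u v → idx v ≤ idx u := fun u v h => h
  refine ⟨σ, ?_⟩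
  intro i
  -- invariant transferred to σ
  have hT : ∀ z : V,
      a i * Nat.card {y | σ.le y z ∧ z ∈ wreach (G i) (L i).le (r i) y} ≤ A * w i := by
    intro z
    have hjz := hidx z
    have hsub : {y | σ.le y z ∧ z ∈ wreach (G i) (L i).le (r i) y}
        ⊆ {y : V | y ∈ l.drop (idx z) ∧ l[idx z]'hjz ∈ wreach (G i) (L i).le (r i) y} := by
      rintro y ⟨hy1, hy2⟩
      have hle : idx z ≤ idx y := hσle y z hy1
      have hylt := hidx y
      have hlt : idx y - idx z < (l.drop (idx z)).length := by
        rw [List.length_drop]; omega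
      have hymem : y ∈ l.drop (idx z) := by
        have hg : (l.drop (idx z))[idx y - idx z]'hlt = y := by
          rw [List.getElem_drop]
          have heq : idx z + (idx y - idx z) = idx y := by omega
          simp only [heq]
          exact hgetidx y
        exact hg ▸ List.getElem_mem hlt
      refine ⟨hymem, ?_⟩
      rw [hgetidx z]
      exact hy2
    calc a i * Nat.card {y | σ.le y z ∧ z ∈ wreach (G i) (L i).le (r i) y}
        ≤ a i * Nat.card {y : V | y ∈ l.drop (idx z) ∧
            l[idx z]'hjz ∈ wreach (G i) (L i).le (r i) y} := by
          refine Nat.mul_le_mul_left _ ?_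
          rw [Nat.card_coe_set_eq, Nat.card_coe_set_eq]
          exact Set.ncard_le_ncard hsub (Set.toFinite _)
      _ ≤ A * w i := hinv (idx z) hjz i
  -- per-vertex bound
  have haux : ∀ x : V,
      a i * Nat.card (sreach (G i) σ.le (r i) x) ≤ A * (w i * w i) + a i * w i := by
    intro x
    have hwrfin : (wreach (G i) (L i).le (r i) x).Finite := Set.toFinite _
    set wrF : Finset V := hwrfin.toFinset with hwrF
    set T : V → Set V :=
      fun z => {y | σ.le y z ∧ z ∈ wreach (G i) (L i).le (r i) y} with hTdef
    have hTfin : ∀ z, (T z).Finite := fun z => Set.toFinite _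
    set TF : V → Finset V := fun z => (hTfin z).toFinset with hTFdef
    have hsub : sreach (G i) σ.le (r i) x
        ⊆ wreach (G i) (L i).le (r i) x ∪ ↑(wrF.biUnion TF) := by
      rintro y ⟨hyx, p, hp, hplen, hpge⟩
      obtain ⟨z, hzmem, hzmin'⟩ :
          ∃ z ∈ p.support, ∀ v ∈ p.support, (L i).le z v := by
        letI : LinearOrder V := L i
        obtain ⟨z, hz1, hz2⟩ := Finset.exists_min_image p.support.toFinset id
          ⟨x, List.mem_toFinset.mpr p.start_mem_support⟩
        exact ⟨z, List.mem_toFinset.mp hz1,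
          fun v hv => hz2 v (List.mem_toFinset.mpr hv)⟩
      by_cases hzy : z = y
      · left
        subst hzy
        exact ⟨hzmin' x p.start_mem_support, p, hp, hplen, hzmin'⟩
      · right
        have hzwr : z ∈ wreach (G i) (L i).le (r i) x := by
          refine ⟨hzmin' x p.start_mem_support, p.takeUntil z hzmem, hp.takeUntil hzmem,
            (p.length_takeUntil_le hzmem).trans hplen, ?_⟩
          intro v hv
          exact hzmin' v (p.support_takeUntil_subset hzmem hv)
        have hzrev : z ∈ p.reverse.support := by
          rw [Walk.support_reverse, List.mem_reverse]; exact hzmem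
        have hzy2 : z ∈ wreach (G i) (L i).le (r i) y := by
          refine ⟨hzmin' y p.end_mem_support, p.reverse.takeUntil z hzrev,
            hp.reverse.takeUntil hzrev, ?_, ?_⟩
          · exact le_trans (p.reverse.length_takeUntil_le hzrev)
              (by rw [Walk.length_reverse]; exact hplen)
          · intro v hv
            have hvs := p.reverse.support_takeUntil_subset hzrev hv
            rw [Walk.support_reverse, List.mem_reverse] at hvs
            exact hzmin' v hvs
        have hσyz : σ.le y z := σ.le_trans _ _ _ hyx (hpge z hzmem hzy)
        refine Finset.mem_coe.mpr (Finset.mem_biUnion.mpr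
          ⟨z, hwrfin.mem_toFinset.mpr hzwr, (hTfin z).mem_toFinset.mpr ⟨hσyz, hzy2⟩⟩)
    have hwr_card : (wreach (G i) (L i).le (r i) x).ncard ≤ w i := by
      rw [← Nat.card_coe_set_eq]
      exact hwc i x
    have hwrF_card : wrF.card ≤ w i := by
      rw [hwrF, ← Set.ncard_eq_toFinset_card _ hwrfin]
      exact hwr_card
    have hcard1 : Nat.card (sreach (G i) σ.le (r i) x)
        ≤ w i + ∑ z ∈ wrF, (TF z).card := by
      calc Nat.card (sreach (G i) σ.le (r i) x)
          = (sreach (G i) σ.le (r i) x).ncard := Nat.card_coe_set_eq _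
        _ ≤ (wreach (G i) (L i).le (r i) x ∪ ↑(wrF.biUnion TF)).ncard :=
            Set.ncard_le_ncard hsub (Set.toFinite _)
        _ ≤ (wreach (G i) (L i).le (r i) x).ncard + (↑(wrF.biUnion TF) : Set V).ncard :=
            Set.ncard_union_le _ _
        _ ≤ w i + (wrF.biUnion TF).card := by
            rw [Set.ncard_coe_finset]
            exact Nat.add_le_add_right hwr_card _
        _ ≤ w i + ∑ z ∈ wrF, (TF z).card :=
            Nat.add_le_add_left Finset.card_biUnion_le _
    have hTF_card : ∀ z, a i * (TF z).card ≤ A * w i := by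
      intro z
      have hc : (TF z).card = Nat.card (T z) := by
        rw [hTFdef, Nat.card_coe_set_eq, Set.ncard_eq_toFinset_card _ (hTfin z)]
      rw [hc]
      exact hT z
    calc a i * Nat.card (sreach (G i) σ.le (r i) x)
        ≤ a i * (w i + ∑ z ∈ wrF, (TF z).card) := Nat.mul_le_mul_left _ hcard1
      _ = a i * w i + ∑ z ∈ wrF, a i * (TF z).card := by rw [Nat.mul_add, Finset.mul_sum]
      _ ≤ a i * w i + ∑ _z ∈ wrF, A * w i := by
          refine Nat.add_le_add_left (Finset.sum_le_sum fun z _ => hTF_card z) _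
      _ = a i * w i + wrF.card * (A * w i) := by rw [Finset.sum_const, smul_eq_mul]
      _ ≤ a i * w i + w i * (A * w i) := by
          refine Nat.add_le_add_left (Nat.mul_le_mul_right _ hwrF_card) _
      _ = A * (w i * w i) + a i * w i := by ring
  -- conclude
  have haR : (0:ℝ) < (a i : ℝ) := by exact_mod_cast ha i
  rcases isEmpty_or_nonempty V with hV | hV
  · have hz : scolOn (G i) σ.le (r i) = 0 := by
      unfold scolOn
      rw [Finset.univ_eq_empty, Finset.sup_empty]
      rfl
    rw [hz]
    push_cast
    positivity
  · obtain ⟨x, -, hx⟩ := Finset.exists_mem_eq_sup Finset.univ Finset.univ_nonempty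
      (fun x => Nat.card (sreach (G i) σ.le (r i) x))
    have hs : scolOn (G i) σ.le (r i) = Nat.card (sreach (G i) σ.le (r i) x) := hx
    have hn := haux x
    rw [← hs] at hn
    have hcast : (a i : ℝ) * (scolOn (G i) σ.le (r i) : ℝ)
        ≤ (A : ℝ) * ((w i : ℝ) * (w i : ℝ)) + (a i : ℝ) * (w i : ℝ) := by
      exact_mod_cast hn
    have hkey : (a i : ℝ) * ((A : ℝ) / (a i : ℝ) * (w i : ℝ) ^ 2 + (w i : ℝ))
        = (A : ℝ) * ((w i : ℝ) * (w i : ℝ)) + (a i : ℝ) * (w i : ℝ) := by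
      field_simp
    refine le_of_mul_le_mul_left ?_ haR
    rw [hkey]
    exact hcast
end

section
/- Let G be a finite simple graph, r ∈ ℕ, and σ an ordering achieving wcol_{2r}(G,σ) = wcol_{2r}(G). Define the auxiliary graph H on V(G) with edges uv whenever u ∈ W_r[G,σ,v] \ {v}. Then scol_2(H, σ) ≤ wcol_{2r}(G). -/
open SimpleGraph

/-- for an ordering `σ` witnessing `wcol_{2r}(G)`, the
auxiliary graph `H` with edges `uv` for `u ∈ W_r[G,σ,v] \ {v}` satisfies
`scol_2(H, σ) ≤ wcol_{2r}(G)`. -/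
theorem aux_graph_scol_two {V : Type*} [Fintype V] (G : SimpleGraph V)
    (r : ℕ) (σ : LinearOrder V)
    (hσ : wcolOn G σ.le (2 * r) = wcol G (2 * r)) :
    scolOn (SimpleGraph.fromRel fun u v => u ∈ wreach G σ.le r v) σ.le 2
      ≤ wcol G (2 * r) := by
  classical
  have hsub : ∀ x : V,
      sreach (SimpleGraph.fromRel fun u v => u ∈ wreach G σ.le r v) σ.le 2 x
        ⊆ wreach G σ.le (2 * r) x := by
    intro x y hy
    obtain ⟨hyx, p, hp, hlen, hsup⟩ := hy
    cases p with
    | nil =>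
        exact ⟨σ.le_refl x, Walk.nil, Walk.IsPath.nil, by simp, by simp [σ.le_refl]⟩
    | cons hadj q =>
      cases q with
      | nil =>
          rw [SimpleGraph.fromRel_adj] at hadj
          obtain ⟨hne, h | h⟩ := hadj
          · exact absurd (σ.le_antisymm _ _ h.1 hyx) hne
          · obtain ⟨h1, p1, hp1, hl1, hs1⟩ := h
            exact ⟨hyx, p1, hp1, by omega, hs1⟩
      | cons hadj2 q2 =>
        cases q2 with
        | nil =>
            rename_i w
            -- w is the middle vertex
            have hwy : w ≠ y := by
              have := hp.support_nodup
              simp at this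
              tauto
            have hxw : σ.le x w := hsup w (by simp) hwy
            rw [SimpleGraph.fromRel_adj] at hadj hadj2
            obtain ⟨hne1, h1 | h1⟩ := hadj
            swap
            · exact absurd (σ.le_antisymm _ _ h1.1 hxw) (Ne.symm hne1)
            obtain ⟨hne2, h2 | h2⟩ := hadj2
            · exact absurd (σ.le_antisymm _ _ h2.1
                (σ.le_trans _ _ _ hyx hxw)) hne2
            obtain ⟨_, p1, hp1, hl1, hs1⟩ := h1
            obtain ⟨_, p2, hp2, hl2, hs2⟩ := h2
            set W : G.Walk x y := p1.reverse.append p2 with hW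
            refine ⟨hyx, W.bypass, W.bypass_isPath, ?_, ?_⟩
            · have h := W.length_bypass_le
              have : W.length = p1.length + p2.length := by
                simp [hW]
              omega
            · intro z hz
              have hz' := W.support_bypass_subset hz
              rw [hW, Walk.mem_support_append_iff, Walk.support_reverse,
                List.mem_reverse] at hz'
              rcases hz' with h | h
              · exact σ.le_trans _ _ _ hyx (hs1 z h)
              · exact hs2 z h
        | cons _ _ =>
            simp [Walk.length_cons] at hlen
  rw [← hσ]
  unfold scolOn wcolOn
  apply Finset.sup_le
  intro x _
  calc Nat.card (sreach (SimpleGraph.fromRel fun u v => u ∈ wreach G σ.le r v) σ.le 2 x)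
      ≤ Nat.card (wreach G σ.le (2 * r) x) :=
        Nat.card_mono (Set.toFinite _) (hsub x)
    _ ≤ _ := Finset.le_sup (f := fun v => Nat.card (wreach G σ.le (2 * r) v)) (Finset.mem_univ x)
end

section
/- For every function n*_0 : ℝ × ℕ → ℕ, there exist ε ∈ (0,1), r ∈ ℕ, a graph G ∈ 𝒢, where 𝒢 is the class of finite graphs whose maximum degree is at most their girth, and for every ordering σ of G a subgraph H of G with |H| ≥ n*_0(ε,r) such that scol_r(H, σ_H) > |H|^ε, where σ_H is the ordering induced on H by σ; that is, there is no function n*_0 witnessing hereditary nowhere-dense orderings for 𝒢. -/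
open SimpleGraph

set_option linter.unusedSectionVars false

namespace NHNDO

variable {V : Type*} [Fintype V] [DecidableEq V]

open Classical in
/-- degree of `v` into the set `s`. -/
noncomputable def ds (G : SimpleGraph V) (s : Finset V) (v : V) : ℕ :=
  (s.filter (G.Adj v)).card

noncomputable def dg (G : SimpleGraph V) (v : V) : ℕ := ds G Finset.univ v

noncomputable def e2s (G : SimpleGraph V) (s : Finset V) : ℕ := ∑ v ∈ s, ds G s v

noncomputable def e2 (G : SimpleGraph V) : ℕ := e2s G Finset.univ

def Good (D g : ℕ) (G : SimpleGraph V) : Prop :=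
  (∀ v, dg G v ≤ D) ∧ ∀ (a : V) (w : G.Walk a a), w.IsCycle → g ≤ w.length

lemma ds_le_card (G : SimpleGraph V) (s : Finset V) (v : V) : ds G s v ≤ s.card := by
  classical
  simp only [ds]
  exact Finset.card_le_card (Finset.filter_subset _ _)

lemma e2_le (G : SimpleGraph V) : e2 G ≤ Fintype.card V * Fintype.card V := by
  classical
  calc e2 G ≤ ∑ _v ∈ (Finset.univ : Finset V), Fintype.card V := by
        refine Finset.sum_le_sum fun v _ => ?_
        simpa [Finset.card_univ] using ds_le_card G Finset.univ v
    _ = Fintype.card V * Fintype.card V := by simp [Finset.card_univ, mul_comm]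

lemma ds_bot (s : Finset V) (v : V) : ds (⊥ : SimpleGraph V) s v = 0 := by
  classical
  simp only [ds]
  apply Finset.card_eq_zero.mpr
  ext x
  simp

lemma e2_bot : e2 (⊥ : SimpleGraph V) = 0 := by
  simp [e2, e2s, ds_bot]

lemma good_bot (D g : ℕ) : Good D g (⊥ : SimpleGraph V) := by
  refine ⟨fun v => by simp [dg, ds_bot], fun a w hw => ?_⟩
  cases w with
  | nil => exact absurd rfl hw.ne_nil
  | cons h _ => exact absurd h (fun hh => hh)

lemma exists_max_good (D g : ℕ) :
    ∃ G : SimpleGraph V, Good D g G ∧ ∀ G' : SimpleGraph V, Good D g G' → e2 G' ≤ e2 G := by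
  classical
  let M := Fintype.card V * Fintype.card V
  let P : ℕ → Prop := fun k => ∃ G : SimpleGraph V, Good D g G ∧ e2 G = k
  have h0 : P 0 := ⟨⊥, good_bot D g, e2_bot⟩
  have hspec : P (Nat.findGreatest P M) := Nat.findGreatest_spec (Nat.zero_le M) h0
  obtain ⟨G, hG, hGe⟩ := hspec
  refine ⟨G, hG, fun G' hG' => ?_⟩
  rw [hGe]
  exact Nat.le_findGreatest (e2_le G') ⟨G', hG', rfl⟩


lemma cycle_extract_aux {G' : SimpleGraph V} {u v : V} (hne : u ≠ v) (c : G'.Walk u u)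
    (hc : c.IsCycle) (he : s(u, v) ∈ c.edges) :
    ∃ W : G'.Walk u v, s(u, v) ∉ W.edges ∧ W.length + 1 = c.length := by
  cases c with
  | nil => simp at he
  | @cons _ b _ h q =>
    rw [Walk.cons_isCycle_iff] at hc
    rw [Walk.edges_cons, List.mem_cons] at he
    by_cases hvb : v = b
    · subst hvb
      refine ⟨q.reverse, ?_, by simp⟩
      rw [Walk.edges_reverse, List.mem_reverse]
      exact hc.2
    · have heq : s(u, v) ∈ q.edges := by
        rcases he with h1 | h2
        · rw [Sym2.eq_iff] at h1
          rcases h1 with ⟨-, h1⟩ | ⟨h1, h2⟩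
          · exact absurd h1 hvb
          · exact absurd h2.symm hne
        · exact h2
      have hqp : q.reverse.IsPath := hc.1.reverse
      have heq' : s(u, v) ∈ q.reverse.edges := by
        rw [Walk.edges_reverse, List.mem_reverse]; exact heq
      have hlen : q.reverse.length = q.length := Walk.length_reverse q
      -- destructure q.reverse
      generalize hw : q.reverse = w at hqp heq' hlen
      cases w with
      | nil => simp at heq'
      | @cons _ y _ h2 q2 =>
        rw [Walk.cons_isPath_iff] at hqp
        rw [Walk.edges_cons, List.mem_cons] at heq'
        have hvy : v = y := by
          rcases heq' with h1 | h1
          · rw [Sym2.eq_iff] at h1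
            rcases h1 with ⟨-, h1⟩ | ⟨h1, h1'⟩
            · exact h1
            · exact absurd h1 h2.ne
          · exact absurd (Walk.fst_mem_support_of_mem_edges q2 h1) hqp.2
        subst hvy
        refine ⟨Walk.cons h q2.reverse, ?_, ?_⟩
        · rw [Walk.edges_cons, List.mem_cons]
          rintro (h1 | h1)
          · rw [Sym2.eq_iff] at h1
            rcases h1 with ⟨-, h1⟩ | ⟨h1, h1'⟩
            · exact hvb h1
            · exact hne h1'.symm
          · rw [Walk.edges_reverse, List.mem_reverse] at h1
            exact hqp.2 (Walk.fst_mem_support_of_mem_edges q2 h1)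
        · have : q2.reverse.length = q2.length := Walk.length_reverse q2
          have h3 : q.length = q2.length + 1 := by
            rw [← hlen]; simp [Walk.length_cons]
          simp [Walk.length_cons, this, h3]

lemma cycle_extract {G' : SimpleGraph V} {u v a : V} (hne : u ≠ v) (c : G'.Walk a a)
    (hc : c.IsCycle) (he : s(u, v) ∈ c.edges) :
    ∃ W : G'.Walk u v, s(u, v) ∉ W.edges ∧ W.length + 1 = c.length := by
  have hu : u ∈ c.support := Walk.fst_mem_support_of_mem_edges c he
  have hc' : (c.rotate u hu).IsCycle := hc.rotate hu
  have he' : s(u, v) ∈ (c.rotate u hu).edges := ((Walk.rotate_edges c u hu).perm.mem_iff).2 he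
  have hlen : (c.rotate u hu).length = c.length := by
    rw [← Walk.length_edges, ← Walk.length_edges]
    exact (Walk.rotate_edges c u hu).perm.length_eq
  obtain ⟨W, h1, h2⟩ := cycle_extract_aux hne (c.rotate u hu) hc' he'
  exact ⟨W, h1, by rw [h2, hlen]⟩


lemma ds_le_ds_add_one {G G2 : SimpleGraph V} {s : Finset V} {v y : V}
    (h : ∀ x, G2.Adj v x → G.Adj v x ∨ x = y) : ds G2 s v ≤ ds G s v + 1 := by
  classical
  simp only [ds]
  have hsub : s.filter (G2.Adj v) ⊆ insert y (s.filter (G.Adj v)) := by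
    intro x hx
    rw [Finset.mem_filter] at hx
    rcases h x hx.2 with h1 | rfl
    · exact Finset.mem_insert_of_mem (Finset.mem_filter.2 ⟨hx.1, h1⟩)
    · exact Finset.mem_insert_self _ _
  calc (s.filter (G2.Adj v)).card ≤ (insert y (s.filter (G.Adj v))).card :=
        Finset.card_le_card hsub
    _ ≤ (s.filter (G.Adj v)).card + 1 := Finset.card_insert_le _ _

lemma ds_congr' {G G2 : SimpleGraph V} {s : Finset V} {v : V}
    (h : ∀ x, G2.Adj v x ↔ G.Adj v x) : ds G2 s v = ds G s v := by
  classical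
  simp only [ds]
  congr 1
  ext x
  rw [Finset.mem_filter, Finset.mem_filter, h]

lemma ds_mono_adj {G G2 : SimpleGraph V} {s : Finset V} {v : V}
    (h : ∀ x, G.Adj v x → G2.Adj v x) : ds G s v ≤ ds G2 s v := by
  classical
  simp only [ds]
  apply Finset.card_le_card
  intro x hx
  rw [Finset.mem_filter] at hx ⊢
  exact ⟨hx.1, h x hx.2⟩

lemma ds_lt_of {G G2 : SimpleGraph V} {s : Finset V} {v y : V}
    (h : ∀ x, G.Adj v x → G2.Adj v x) (hy : y ∈ s) (h2 : G2.Adj v y) (h3 : ¬ G.Adj v y) :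
    ds G s v < ds G2 s v := by
  classical
  simp only [ds]
  apply Finset.card_lt_card
  constructor
  · intro x hx
    rw [Finset.mem_filter] at hx ⊢
    exact ⟨hx.1, h x hx.2⟩
  · intro hsub
    have hmem : y ∈ s.filter (G2.Adj v) := Finset.mem_filter.2 ⟨hy, h2⟩
    have := hsub hmem
    rw [Finset.mem_filter] at this
    exact h3 this.2

lemma add_edge {G : SimpleGraph V} {D g : ℕ} (hG : Good D g G) {u v : V} (hne : u ≠ v)
    (hnadj : ¬ G.Adj u v) (hu : dg G u < D) (hv : dg G v < D)
    (hfar : ∀ W : G.Walk u v, g ≤ W.length + 1) :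
    ∃ G2 : SimpleGraph V, Good D g G2 ∧ e2 G < e2 G2 := by
  classical
  set G2 : SimpleGraph V := G ⊔ fromEdgeSet {s(u, v)} with hG2
  have hadj : ∀ a b, G2.Adj a b ↔ G.Adj a b ∨ (a = u ∧ b = v) ∨ (a = v ∧ b = u) := by
    intro a b
    rw [hG2, SimpleGraph.sup_adj, SimpleGraph.fromEdgeSet_adj]
    constructor
    · rintro (h | ⟨h1, h2⟩)
      · exact Or.inl h
      · rw [Set.mem_singleton_iff, Sym2.eq_iff] at h1
        exact Or.inr h1
    · rintro (h | ⟨rfl, rfl⟩ | ⟨rfl, rfl⟩)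
      · exact Or.inl h
      · exact Or.inr ⟨by simp, hne⟩
      · exact Or.inr ⟨by rw [Set.mem_singleton_iff, Sym2.eq_iff]; tauto, hne.symm⟩
  have hGle : ∀ a b, G.Adj a b → G2.Adj a b := fun a b h => (hadj a b).2 (Or.inl h)
  have hedges : G2.edgeSet = G.edgeSet ∪ {s(u, v)} := by
    rw [hG2, edgeSet_sup, edgeSet_fromEdgeSet]
    congr 1
    ext e
    simp only [Set.mem_diff, Set.mem_singleton_iff, Set.mem_setOf_eq, and_iff_left_iff_imp]
    rintro rfl
    simpa using hne
  refine ⟨G2, ⟨?_, ?_⟩, ?_⟩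
  · -- degrees
    intro w
    rcases eq_or_ne w u with rfl | hwu
    · have h1 : dg G2 w ≤ dg G w + 1 := by
        apply ds_le_ds_add_one
        intro x hx
        rcases (hadj w x).1 hx with h | ⟨-, rfl⟩ | ⟨h1, -⟩
        · exact Or.inl h
        · exact Or.inr rfl
        · exact absurd h1 hne
      omega
    · rcases eq_or_ne w v with rfl | hwv
      · have h1 : dg G2 w ≤ dg G w + 1 := by
          apply ds_le_ds_add_one
          intro x hx
          rcases (hadj w x).1 hx with h | ⟨h1, -⟩ | ⟨-, rfl⟩
          · exact Or.inl h
          · exact absurd h1 hne.symm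
          · exact Or.inr rfl
        omega
      · have h1 : dg G2 w = dg G w := by
          apply ds_congr'
          intro x
          rw [hadj]
          constructor
          · rintro (h | ⟨h1, -⟩ | ⟨h1, -⟩)
            · exact h
            · exact absurd h1 hwu
            · exact absurd h1 hwv
          · exact Or.inl
        rw [h1]
        exact hG.1 w
  · -- girth
    intro a w hw
    by_cases hmem : s(u, v) ∈ w.edges
    · obtain ⟨W', hW'e, hW'l⟩ := cycle_extract hne w hw hmem
      have hsub : ∀ e ∈ W'.edges, e ∈ G.edgeSet := by
        intro e hee
        have h1 : e ∈ G2.edgeSet := W'.edges_subset_edgeSet hee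
        rw [hedges] at h1
        rcases h1 with h1 | h1
        · exact h1
        · rw [Set.mem_singleton_iff] at h1
          exact absurd (h1 ▸ hee) hW'e
      have := hfar (W'.transfer G hsub)
      rw [Walk.length_transfer] at this
      omega
    · have hsub : ∀ e ∈ w.edges, e ∈ G.edgeSet := by
        intro e hee
        have h1 : e ∈ G2.edgeSet := w.edges_subset_edgeSet hee
        rw [hedges] at h1
        rcases h1 with h1 | h1
        · exact h1
        · rw [Set.mem_singleton_iff] at h1
          exact absurd (h1 ▸ hee) hmem
      have hcyc : (w.transfer G hsub).IsCycle := hw.transfer hsub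
      have := hG.2 a (w.transfer G hsub) hcyc
      rwa [Walk.length_transfer] at this
  · -- e2 strictly increases
    simp only [e2, e2s]
    apply Finset.sum_lt_sum
    · intro i _
      exact ds_mono_adj (hGle i)
    · refine ⟨u, Finset.mem_univ u, ?_⟩
      exact ds_lt_of (hGle u) (Finset.mem_univ v)
        ((hadj u v).2 (Or.inr (Or.inl ⟨rfl, rfl⟩))) hnadj


open Classical in
noncomputable def ball (G : SimpleGraph V) (u₀ : V) (k : ℕ) : Finset V :=
  Finset.univ.filter (fun w => ∃ p : G.Walk u₀ w, p.length ≤ k)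

lemma mem_ball {G : SimpleGraph V} {u₀ w : V} {k : ℕ} :
    w ∈ ball G u₀ k ↔ ∃ p : G.Walk u₀ w, p.length ≤ k := by
  classical
  simp only [ball]
  rw [Finset.mem_filter]
  simp

lemma head_decomp {G : SimpleGraph V} {b a : V} {k : ℕ} (r : G.Walk b a) (hk : r.length ≤ k + 1) :
    ∃ w, (∃ q : G.Walk a w, q.length ≤ k) ∧ (w = b ∨ G.Adj w b) := by
  cases r with
  | nil => exact ⟨b, ⟨Walk.nil, Nat.zero_le k⟩, Or.inl rfl⟩
  | @cons _ y _ h q =>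
    refine ⟨y, ⟨q.reverse, ?_⟩, Or.inr h.symm⟩
    rw [Walk.length_reverse]
    simpa using hk

lemma ball_card {G : SimpleGraph V} {D : ℕ} (hD : ∀ v, dg G v ≤ D) (u₀ : V) (k : ℕ) :
    (ball G u₀ k).card ≤ (D + 1) ^ k := by
  classical
  induction k with
  | zero =>
    have : ball G u₀ 0 ⊆ {u₀} := by
      intro w hw
      obtain ⟨p, hp⟩ := mem_ball.1 hw
      have : u₀ = w := Walk.eq_of_length_eq_zero (Nat.le_zero.1 hp)
      simp [← this]
    simpa using Finset.card_le_card this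
  | succ k ih =>
    have hsub : ball G u₀ (k + 1) ⊆
        (ball G u₀ k).biUnion (fun w => insert w (Finset.univ.filter (G.Adj w))) := by
      intro x hx
      obtain ⟨p, hp⟩ := mem_ball.1 hx
      have hrl : p.reverse.length ≤ k + 1 := by rwa [Walk.length_reverse]
      obtain ⟨w, ⟨q, hq⟩, hcase⟩ := head_decomp p.reverse hrl
      rw [Finset.mem_biUnion]
      refine ⟨w, mem_ball.2 ⟨q, hq⟩, ?_⟩
      rcases hcase with rfl | hadj
      · exact Finset.mem_insert_self _ _
      · exact Finset.mem_insert_of_mem (Finset.mem_filter.2 ⟨Finset.mem_univ x, hadj⟩)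
    calc (ball G u₀ (k + 1)).card
        ≤ ((ball G u₀ k).biUnion fun w => insert w (Finset.univ.filter (G.Adj w))).card :=
          Finset.card_le_card hsub
      _ ≤ ∑ w ∈ ball G u₀ k, (insert w (Finset.univ.filter (G.Adj w))).card :=
          Finset.card_biUnion_le
      _ ≤ ∑ _w ∈ ball G u₀ k, (D + 1) := by
          refine Finset.sum_le_sum fun w _ => ?_
          calc (insert w (Finset.univ.filter (G.Adj w))).card
              ≤ (Finset.univ.filter (G.Adj w)).card + 1 := Finset.card_insert_le _ _
            _ ≤ D + 1 := by
                have h1 : (Finset.univ.filter (G.Adj w)).card = dg G w := rfl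
                have := hD w
                omega
      _ ≤ (D + 1) ^ k * (D + 1) := by
          rw [Finset.sum_const, smul_eq_mul]
          exact Nat.mul_le_mul_right _ ih
      _ = (D + 1) ^ (k + 1) := (pow_succ (D + 1) k).symm

lemma low_in_ball {G : SimpleGraph V} {D g : ℕ} (hG : Good D g G)
    (hmax : ∀ G' : SimpleGraph V, Good D g G' → e2 G' ≤ e2 G) (hg : 3 ≤ g) {u₀ u : V}
    (h₀ : dg G u₀ < D) (hu : dg G u < D) : u ∈ ball G u₀ (g - 2) := by
  classical
  rcases eq_or_ne u u₀ with rfl | hne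
  · exact mem_ball.2 ⟨Walk.nil, Nat.zero_le _⟩
  by_cases hadj : G.Adj u₀ u
  · refine mem_ball.2 ⟨Walk.cons hadj Walk.nil, ?_⟩
    simp only [Walk.length_cons, Walk.length_nil]
    omega
  by_contra hball
  have hfar : ∀ W : G.Walk u₀ u, g ≤ W.length + 1 := by
    intro W
    by_contra hWl
    exact hball (mem_ball.2 ⟨W, by omega⟩)
  obtain ⟨G2, hG2, hlt⟩ := add_edge hG (Ne.symm hne) hadj h₀ hu hfar
  exact absurd (hmax G2 hG2) (by omega)

lemma e2_lower {G : SimpleGraph V} {D B : ℕ} (hD : ∀ v, dg G v ≤ D)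
    (hL : (Finset.univ.filter (fun v => dg G v < D)).card ≤ B) :
    Fintype.card V * D ≤ e2 G + B * D := by
  classical
  set L := Finset.univ.filter (fun v => dg G v < D) with hLdef
  have hsub : Finset.univ \ L ⊆ Finset.univ := Finset.sdiff_subset
  have h1 : ∑ v ∈ Finset.univ \ L, dg G v ≤ e2 G := by
    simp only [e2, e2s]
    exact Finset.sum_le_sum_of_subset hsub
  have h2 : (Finset.univ \ L).card * D ≤ ∑ v ∈ Finset.univ \ L, dg G v := by
    rw [← smul_eq_mul]
    refine Finset.card_nsmul_le_sum _ _ _ fun v hv => ?_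
    rw [Finset.mem_sdiff, hLdef, Finset.mem_filter] at hv
    have := hD v
    have h3 : ¬ dg G v < D := fun hc => hv.2 ⟨Finset.mem_univ v, hc⟩
    omega
  have h4 : (Finset.univ \ L).card = Fintype.card V - L.card := by
    rw [Finset.card_sdiff_of_subset (Finset.subset_univ L), Finset.card_univ]
  rw [h4] at h2
  have h5 : Fintype.card V * D ≤ (Fintype.card V - L.card) * D + L.card * D := by
    rcases Nat.le_total L.card (Fintype.card V) with h | h
    · rw [← Nat.add_mul]
      have : Fintype.card V - L.card + L.card = Fintype.card V := Nat.sub_add_cancel h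
      rw [this]
    · have : Fintype.card V - L.card = 0 := Nat.sub_eq_zero_of_le h
      rw [this]
      simp
      exact Nat.mul_le_mul_right _ h
  have h6 : L.card * D ≤ B * D := Nat.mul_le_mul_right _ hL
  omega


lemma e2s_empty (G : SimpleGraph V) : e2s G ∅ = 0 := by simp [e2s]

lemma clean (G : SimpleGraph V) (N : ℕ) :
    ∀ (k : ℕ) (s : Finset V), s.card ≤ k → 2 * N * s.card < e2s G s →
    ∃ t, t ⊆ s ∧ t.Nonempty ∧ ∀ v ∈ t, N + 1 ≤ ds G t v := by
  classical
  intro k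
  induction k with
  | zero =>
    intro s hs h
    rw [Finset.card_eq_zero.1 (Nat.le_zero.1 hs)] at h
    simp [e2s_empty] at h
  | succ k ih =>
    intro s hs h
    by_cases hall : ∀ v ∈ s, N + 1 ≤ ds G s v
    · refine ⟨s, Finset.Subset.refl s, ?_, hall⟩
      rw [Finset.nonempty_iff_ne_empty]
      rintro rfl
      simp [e2s_empty] at h
    · push_neg at hall
      obtain ⟨v, hv, hdv⟩ := hall
      have hdvN : ds G s v ≤ N := by omega
      -- key estimate : e2s G s ≤ e2s G (s.erase v) + 2 * ds G s v
      have hkey : e2s G s ≤ e2s G (s.erase v) + 2 * ds G s v := by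
        have hsplit : e2s G s = ds G s v + ∑ w ∈ s.erase v, ds G s w := by
          rw [e2s, ← Finset.add_sum_erase _ _ hv]
        have hterm : ∀ w ∈ s.erase v,
            ds G s w ≤ ds G (s.erase v) w + (if G.Adj w v then 1 else 0) := by
          intro w _
          by_cases hwv : G.Adj w v
          · rw [if_pos hwv]
            simp only [ds]
            have : s.filter (G.Adj w) ⊆ insert v ((s.erase v).filter (G.Adj w)) := by
              intro x hx
              rw [Finset.mem_filter] at hx
              rcases eq_or_ne x v with rfl | hxv
              · exact Finset.mem_insert_self _ _
              · exact Finset.mem_insert_of_mem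
                  (Finset.mem_filter.2 ⟨Finset.mem_erase.2 ⟨hxv, hx.1⟩, hx.2⟩)
            calc (s.filter (G.Adj w)).card
                ≤ (insert v ((s.erase v).filter (G.Adj w))).card := Finset.card_le_card this
              _ ≤ ((s.erase v).filter (G.Adj w)).card + 1 := Finset.card_insert_le _ _
          · rw [if_neg hwv]
            simp only [ds, Nat.add_zero]
            apply Finset.card_le_card
            intro x hx
            rw [Finset.mem_filter] at hx
            rcases eq_or_ne x v with rfl | hxv
            · exact absurd hx.2 hwv
            · exact Finset.mem_filter.2 ⟨Finset.mem_erase.2 ⟨hxv, hx.1⟩, hx.2⟩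
        have hsum : ∑ w ∈ s.erase v, ds G s w ≤
            e2s G (s.erase v) + ∑ w ∈ s.erase v, (if G.Adj w v then 1 else 0) := by
          rw [e2s, ← Finset.sum_add_distrib]
          exact Finset.sum_le_sum hterm
        have hcnt : ∑ w ∈ s.erase v, (if G.Adj w v then 1 else 0) ≤ ds G s v := by
          rw [← Finset.card_filter]
          simp only [ds]
          apply Finset.card_le_card
          intro x hx
          rw [Finset.mem_filter] at hx
          exact Finset.mem_filter.2 ⟨Finset.mem_of_mem_erase hx.1, hx.2.symm⟩
        omega
      have hcard : (s.erase v).card = s.card - 1 := Finset.card_erase_of_mem hv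
      have hcard1 : 1 ≤ s.card := Finset.card_pos.2 ⟨v, hv⟩
      have hrec : 2 * N * (s.erase v).card < e2s G (s.erase v) := by
        have : 2 * N * s.card = 2 * N * (s.card - 1) + 2 * N := by
          have h1 : s.card - 1 + 1 = s.card := Nat.sub_add_cancel hcard1
          calc 2 * N * s.card = 2 * N * (s.card - 1 + 1) := by rw [h1]
            _ = 2 * N * (s.card - 1) + 2 * N := by ring
        rw [hcard]
        omega
      obtain ⟨t, hts, htne, ht⟩ := ih (s.erase v) (by omega) hrec
      exact ⟨t, hts.trans (Finset.erase_subset _ _), htne, ht⟩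


lemma exists_cycle {G : SimpleGraph V} {s₀ : Finset V} (hne : s₀.Nonempty)
    (h2 : ∀ v ∈ s₀, 2 ≤ ds G s₀ v) : ¬ G.IsAcyclic := by
  classical
  have hstep : ∀ p c, c ∈ s₀ → ∃ x, x ∈ s₀ ∧ G.Adj c x ∧ x ≠ p := by
    intro p c hc
    have h2c := h2 c hc
    simp only [ds] at h2c
    have hcard : 1 ≤ ((s₀.filter (G.Adj c)).erase p).card := by
      by_cases hp : p ∈ s₀.filter (G.Adj c)
      · rw [Finset.card_erase_of_mem hp]; omega
      · rw [Finset.erase_eq_of_notMem hp]; omega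
    obtain ⟨x, hx⟩ := Finset.card_pos.1 hcard
    rw [Finset.mem_erase, Finset.mem_filter] at hx
    exact ⟨x, hx.2.1, hx.2.2, hx.1⟩
  have hchoice : ∀ p c, ∃ x, c ∈ s₀ → x ∈ s₀ ∧ G.Adj c x ∧ x ≠ p := by
    intro p c
    by_cases hc : c ∈ s₀
    · obtain ⟨x, hx⟩ := hstep p c hc
      exact ⟨x, fun _ => hx⟩
    · exact ⟨c, fun h => absurd h hc⟩
  choose nxt hnxt using hchoice
  obtain ⟨a, ha⟩ := hne
  let F : ℕ → V × V := fun n => Nat.rec (a, nxt a a) (fun _ pr => (pr.2, nxt pr.1 pr.2)) n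
  have hInv : ∀ n, (F n).1 ∈ s₀ ∧ (F n).2 ∈ s₀ ∧ G.Adj (F n).1 (F n).2 := by
    intro n
    induction n with
    | zero =>
      have h := hnxt a a ha
      exact ⟨ha, h.1, h.2.1⟩
    | succ n ih =>
      have h := hnxt (F n).1 (F n).2 ih.2.1
      exact ⟨ih.2.1, h.1, h.2.1⟩
  let f : ℕ → V := fun n => (F n).1
  have hadj : ∀ n, G.Adj (f n) (f (n + 1)) := fun n => (hInv n).2.2
  have hnb : ∀ n, f (n + 2) ≠ f n := fun n => (hnxt (F n).1 (F n).2 (hInv n).2.1).2.2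
  -- pigeonhole
  obtain ⟨i, j, hij, hfij⟩ :=
    Fintype.exists_ne_map_eq_of_card_lt (fun i : Fin (Fintype.card V + 1) => f i) (by simp)
  have hex : ∃ k, ∃ j0, j0 < k ∧ f j0 = f k := by
    rcases lt_or_gt_of_ne hij with h | h
    · exact ⟨j.1, i.1, h, hfij⟩
    · exact ⟨i.1, j.1, h, hfij.symm⟩
  obtain ⟨K, hKspec, hKmin⟩ : ∃ K : ℕ, (∃ j0, j0 < K ∧ f j0 = f K) ∧
      ∀ m, m < K → ¬∃ j0, j0 < m ∧ f j0 = f m :=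
    ⟨Nat.find hex, Nat.find_spec hex, fun m hm => Nat.find_min hex hm⟩
  obtain ⟨J, hJK, hfJK⟩ := hKspec
  have hinj : ∀ a b, a < b → b < K → f a ≠ f b := by
    intro a b hab hbK hfab
    exact hKmin b hbK ⟨a, hab, hfab⟩
  have hK1 : K ≠ J + 1 := by
    rintro rfl
    exact (hadj J).ne hfJK
  have hK2 : K ≠ J + 2 := by
    rintro rfl
    exact hnb J hfJK.symm
  have hJ3 : J + 3 ≤ K := by omega
  -- segment walks
  have hseg : ∀ (l i : ℕ), ∃ w : G.Walk (f i) (f (i + l)),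
      w.length = l ∧ w.support = (List.range' i (l + 1)).map f ∧
      w.edges = (List.range' i l).map (fun t => s(f t, f (t + 1))) := by
    intro l
    induction l with
    | zero =>
      intro i
      exact ⟨Walk.nil, by simp, by simp, by simp⟩
    | succ l ih =>
      intro i
      obtain ⟨w, hwl, hws, hwe⟩ := ih i
      refine ⟨w.concat (hadj (i + l)), ?_, ?_, ?_⟩
      · rw [Walk.length_concat, hwl]
      · have hr : List.range' i (l + 1 + 1) = List.range' i (l + 1) ++ [i + (l + 1)] := by
          simpa using List.range'_concat (step := 1) (s := i) (n := l + 1)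
        rw [Walk.support_concat, hws, hr, List.map_append]
        simp
      · have hr : List.range' i (l + 1) = List.range' i l ++ [i + l] := by
          simpa using List.range'_concat (step := 1) (s := i) (n := l)
        rw [Walk.edges_concat, hwe, hr, List.map_append]
        simp
        exact Or.inl rfl
  -- build the cycle
  set l := K - (J + 1) with hldef
  have hJl : J + 1 + l = K := by omega
  obtain ⟨w, hwl, hws, hwe⟩ := hseg l (J + 1)
  have hend : f (J + 1 + l) = f J := by rw [hJl, ← hfJK]
  set W : G.Walk (f (J + 1)) (f J) := w.copy rfl hend with hWdef
  have hWs : W.support = (List.range' (J + 1) (l + 1)).map f := by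
    rw [hWdef, Walk.support_copy, hws]
  have hWe : W.edges = (List.range' (J + 1) l).map (fun t => s(f t, f (t + 1))) := by
    rw [hWdef, Walk.edges_copy, hwe]
  have hWpath : W.IsPath := by
    rw [Walk.isPath_def, hWs]
    refine List.Nodup.map_on ?_ (List.nodup_range' 1)
    intro x hx y hy hfxy
    rw [List.mem_range'_1] at hx hy
    by_contra hxy
    rcases Nat.lt_or_ge x y with h | h
    · rcases Nat.lt_or_ge y K with h1 | h1
      · exact hinj x y h h1 hfxy
      · have hyK : y = K := by omega
        subst hyK
        have : f x = f J := by rw [hfxy, ← hfJK]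
        exact hinj J x (by omega) (by omega) this.symm
    · have h' : y < x := by omega
      rcases Nat.lt_or_ge x K with h1 | h1
      · exact hinj y x h' h1 hfxy.symm
      · have hxK : x = K := by omega
        subst hxK
        have : f y = f J := by rw [← hfxy, ← hfJK]
        exact hinj J y (by omega) (by omega) this.symm
  have hcyc : (Walk.cons (hadj J) W).IsCycle := by
    rw [Walk.cons_isCycle_iff]
    refine ⟨hWpath, ?_⟩
    rw [hWe]
    intro hmem
    rw [List.mem_map] at hmem
    obtain ⟨t, ht, hteq⟩ := hmem
    rw [List.mem_range'_1] at ht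
    rw [Sym2.eq_iff] at hteq
    rcases hteq with ⟨h1, h2⟩ | ⟨h1, h2⟩
    · exact hinj J t (by omega) (by omega) h1.symm
    · -- f t = f (J + 1) and f (t + 1) = f J
      rcases Nat.lt_or_ge (t + 1) K with hh | hh
      · exact hinj J (t + 1) (by omega) hh h2.symm
      · have htK : t + 1 = K := by omega
        have htJ1 : J + 1 < t := by omega
        exact hinj (J + 1) t htJ1 (by omega) h1.symm
  intro hac
  exact hac _ hcyc


lemma main_exists (N : ℕ) (hN : 1 ≤ N) :
    ∃ (n : ℕ) (G : SimpleGraph (Fin n)) (s₀ : Finset (Fin n)),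
      (∀ v, ((G.neighborSet v).ncard : ℕ∞) ≤ G.girth) ∧ s₀.Nonempty ∧
      ∀ v ∈ s₀, N + 1 ≤ ds G s₀ v := by
  classical
  set D := 3 * N + 3 with hD
  set B := (D + 1) ^ D with hB
  set n := (B + 1) * D with hn
  obtain ⟨G, hG, hmax⟩ := exists_max_good (V := Fin n) D D
  have hLcard : (Finset.univ.filter (fun v => dg G v < D)).card ≤ B := by
    rcases Finset.eq_empty_or_nonempty
        (Finset.univ.filter (fun v : Fin n => dg G v < D)) with he | ⟨u₀, hu₀⟩
    · rw [he]
      simp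
    · have hu₀' : dg G u₀ < D := (Finset.mem_filter.1 hu₀).2
      have hsub : Finset.univ.filter (fun v => dg G v < D) ⊆ ball G u₀ (D - 2) := by
        intro u hu
        exact low_in_ball hG hmax (by omega) hu₀' (Finset.mem_filter.1 hu).2
      calc (Finset.univ.filter (fun v => dg G v < D)).card
          ≤ (ball G u₀ (D - 2)).card := Finset.card_le_card hsub
        _ ≤ (D + 1) ^ (D - 2) := ball_card hG.1 u₀ (D - 2)
        _ ≤ (D + 1) ^ D := Nat.pow_le_pow_right (by omega) (by omega)
  have hcardn : Fintype.card (Fin n) = n := Fintype.card_fin n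
  have he2 : n * D ≤ e2 G + B * D := by
    have h := e2_lower hG.1 hLcard
    rwa [hcardn] at h
  have key : 2 * N * (B + 1) + B < (B + 1) * D := by
    have hx : (B + 1) * D = 3 * (N * (B + 1)) + 3 * B + 3 := by rw [hD]; ring
    have hy : 2 * N * (B + 1) = 2 * (N * (B + 1)) := by ring
    rw [hx, hy]
    omega
  have harith : 2 * N * n + B * D < n * D := by
    have hD0 : 0 < D := by omega
    calc 2 * N * n + B * D = (2 * N * (B + 1) + B) * D := by rw [hn]; ring
      _ < ((B + 1) * D) * D := (Nat.mul_lt_mul_right hD0).mpr key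
      _ = n * D := by rw [hn]
  have h2n : 2 * N * n < e2 G := by omega
  obtain ⟨s₀, hsub, hne, hmin⟩ := clean G N n Finset.univ
    (by rw [Finset.card_univ, hcardn]) (by rw [Finset.card_univ, hcardn]; exact h2n)
  refine ⟨n, G, s₀, ?_, hne, hmin⟩
  have hnac : ¬ G.IsAcyclic :=
    exists_cycle hne (fun v hv => le_trans (by omega) (hmin v hv))
  have hgirth : D ≤ G.girth := by
    have h1 : (D : ℕ∞) ≤ G.egirth :=
      le_egirth.2 (fun a w hw => by exact_mod_cast hG.2 a w hw)
    have h2 : G.egirth ≠ ⊤ := by rwa [Ne, egirth_eq_top]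
    have h3 := ENat.toNat_le_toNat h1 h2
    simpa [SimpleGraph.girth] using h3
  intro v
  have hdeg : (G.neighborSet v).ncard = dg G v := by
    rw [Set.ncard_eq_toFinset_card']
    simp only [dg, ds]
    congr 1
    ext x
    simp [Set.mem_toFinset]
  rw [hdeg]
  have hvD : dg G v ≤ D := hG.1 v
  exact_mod_cast Nat.cast_le.mpr (le_trans hvD hgirth)


lemma exists_sigma_max {α : Type*} (σ : LinearOrder α) (s : Finset α) (hs : s.Nonempty) :
    ∃ v ∈ s, ∀ w ∈ s, σ.le w v := by
  letI := σ
  obtain ⟨v, hv, h⟩ := Finset.exists_max_image s id hs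
  exact ⟨v, hv, h⟩

end NHNDO

/-- no function witnesses hereditary nowhere-dense orderings
for the class of graphs with maximum degree at most girth. -/
theorem no_hereditary_nowhere_dense_orderings :
    ∀ n₀ : ℝ × ℕ → ℕ, ∃ ε : ℝ, 0 < ε ∧ ε < 1 ∧ ∃ (r m : ℕ) (G : SimpleGraph (Fin m)),
      (∀ v, ((G.neighborSet v).ncard : ℕ∞) ≤ G.girth) ∧
      ∀ σ : LinearOrder (Fin m), ∃ (s : Finset (Fin m)) (H : SimpleGraph ↥s),
        (∀ u v : ↥s, H.Adj u v → G.Adj u.1 v.1) ∧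
        n₀ (ε, r) ≤ s.card ∧
        ((s.card : ℝ) ^ ε < (scolOn H (fun u v => σ.le u.1 v.1) r : ℝ)) := by
  classical
  intro n₀
  refine ⟨1/2, by norm_num, by norm_num, ?_⟩
  set N := max 1 (n₀ (1/2, 1)) with hNdef
  obtain ⟨n, G, s₀, hclass, hne, hmin⟩ := NHNDO.main_exists N (le_max_left _ _)
  refine ⟨1, n, G, hclass, ?_⟩
  intro σ
  obtain ⟨v, hv, hvmax⟩ := NHNDO.exists_sigma_max σ s₀ hne
  set t := s₀.filter (G.Adj v) with htdef
  have htcard : N + 1 ≤ t.card := hmin v hv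
  have hts : t ⊆ s₀ := Finset.filter_subset _ _
  set s : Finset (Fin n) := insert v t with hsdef
  have hvs : v ∈ s := Finset.mem_insert_self _ _
  have hssub : ∀ y ∈ s, y ∈ s₀ := by
    intro y hy
    rcases Finset.mem_insert.1 hy with rfl | hyt
    · exact hv
    · exact hts hyt
  have hvt : v ∉ t := by
    intro h
    exact G.irrefl (Finset.mem_filter.1 h).2
  have hscard : s.card = t.card + 1 := Finset.card_insert_of_notMem hvt
  have hs2 : 2 ≤ s.card := by omega
  have hsN : n₀ (1/2, 1) ≤ s.card := by
    have h1 : n₀ (1/2, 1) ≤ N := le_max_right _ _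
    omega
  let H : SimpleGraph ↥s :=
    { Adj := fun a b => (a.1 = v ∨ b.1 = v) ∧ G.Adj a.1 b.1
      symm := Std.Symm.mk <| by
        rintro a b ⟨h1, h2⟩
        exact ⟨h1.symm, h2.symm⟩
      loopless := ⟨fun a h => G.irrefl h.2⟩ }
  have hHsub : ∀ u w : ↥s, H.Adj u w → G.Adj u.1 w.1 := fun u w h => h.2
  refine ⟨s, H, hHsub, hsN, ?_⟩
  set le' : ↥s → ↥s → Prop := fun a b => σ.le a.1 b.1 with hle'
  set x : ↥s := ⟨v, hvs⟩ with hx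
  have hsr : ∀ y : ↥s, y ∈ sreach H le' 1 x := by
    intro y
    refine ⟨hvmax y.1 (hssub y.1 y.2), ?_⟩
    rcases eq_or_ne y x with rfl | hyx
    · refine ⟨Walk.nil, Walk.IsPath.nil, by simp, ?_⟩
      intro z hz hzy
      rw [Walk.support_nil, List.mem_singleton] at hz
      exact absurd hz hzy
    · have hy1 : y.1 ∈ t := by
        rcases Finset.mem_insert.1 y.2 with h | h
        · exact absurd (Subtype.ext h) hyx
        · exact h
      have hadjH : H.Adj x y := ⟨Or.inl rfl, (Finset.mem_filter.1 hy1).2⟩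
      refine ⟨Walk.cons hadjH Walk.nil, ?_, by simp, ?_⟩
      · rw [Walk.cons_isPath_iff]
        refine ⟨Walk.IsPath.nil, ?_⟩
        rw [Walk.support_nil, List.mem_singleton]
        exact fun h => hyx (h.symm)
      · intro z hz hzy
        rw [Walk.support_cons, List.mem_cons] at hz
        rcases hz with rfl | hz
        · exact σ.le_refl _
        · rw [Walk.support_nil, List.mem_singleton] at hz
          exact absurd hz hzy
  have huniv : sreach H le' 1 x = Set.univ := Set.eq_univ_of_forall hsr
  have hcard2 : Nat.card (sreach H le' 1 x) = s.card := by
    rw [huniv, Nat.card_congr (Equiv.Set.univ _), Nat.card_eq_fintype_card, Fintype.card_coe]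
  have hscol : s.card ≤ scolOn H le' 1 := by
    rw [← hcard2]
    unfold scolOn
    exact Finset.le_sup (f := fun z => Nat.card (sreach H le' 1 z)) (Finset.mem_univ x)
  have h2s : (2 : ℝ) ≤ (s.card : ℝ) := by exact_mod_cast hs2
  have h1s : (1 : ℝ) < (s.card : ℝ) := by linarith
  calc (s.card : ℝ) ^ (1/2 : ℝ) < (s.card : ℝ) ^ (1 : ℝ) :=
        Real.rpow_lt_rpow_of_exponent_lt h1s (by norm_num)
    _ = (s.card : ℝ) := Real.rpow_one _
    _ ≤ (scolOn H le' 1 : ℝ) := by exact_mod_cast hscol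
end

section
/- In the graph G of Example 1 (with parameters n ≥ t ≥ 4 and path lengths r < r'): for any ordering σ of G with Z <_σ X <_σ Y, we have scol_r(G,σ) ≤ 2t + 1. -/
/-!
A vertex `y` strongly `r`-reachable from `x` lies below `x`, and the other vertices of a witnessing
path lie above `x`; together with `Z <_σ X <_σ Y` this pins the path down. From `x_{i,j}` it cannot
leave the paths `P_{i,j}^h`, `Q_{i,j}^h` before it reaches `Z`, so `y ∈ {x_{i,j}} ∪ Z_i ∪ Z_j`: at
most `2t + 1` choices. From an internal vertex of one of these paths, whose two ends lie below it,
it runs along that path and stops at the first vertex below `x` on either side: at most `3`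
choices. From `z_i^h` it ends in `Z` within distance `r`, hence in `Z_i`, because `Z_i` and any
other `Z_j` are `r' > r` apart: at most `t` choices.
-/

open SimpleGraph

/-! ### The graph of Example 1. -/

/-- Ordered pairs `(i,j)` with `i ≠ j`. -/
abbrev Idx (n : ℕ) := {p : Fin n × Fin n // p.1 ≠ p.2}

/-- Vertex set of Example 1: `Z ⊕ (X ⊕ (Y_P ⊕ Y_Q))`, where `Y_P` (resp. `Y_Q`)
are the internal vertices of the paths `P^h_{i,j}` (resp. `Q^h_{i,j}`). -/
abbrev ExV (n t r r' : ℕ) : Type :=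
  (Fin n × Fin t) ⊕ (Idx n ⊕ ((Idx n × Fin t × Fin (r - 1)) ⊕ (Idx n × Fin t × Fin (r' - r - 1))))

variable (n t r r' : ℕ)

def zV (i : Fin n) (h : Fin t) : ExV n t r r' := Sum.inl (i, h)
def xV (p : Idx n) : ExV n t r r' := Sum.inr (Sum.inl p)
def pIn (p : Idx n) (h : Fin t) (k : Fin (r - 1)) : ExV n t r r' :=
  Sum.inr (Sum.inr (Sum.inl (p, h, k)))
def qIn (p : Idx n) (h : Fin t) (k : Fin (r' - r - 1)) : ExV n t r r' :=
  Sum.inr (Sum.inr (Sum.inr (p, h, k)))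

/-- The `k`-th vertex of the path `P^h_{i,j}` (of length `r`, from `z_i^h` to `x_{i,j}`). -/
def pv (p : Idx n) (h : Fin t) (k : ℕ) : ExV n t r r' :=
  if h0 : k = 0 then zV n t r r' p.1.1 h
  else if hk : k < r then pIn n t r r' p h ⟨k - 1, by omega⟩
  else xV n t r r' p

/-- The `k`-th vertex of the path `Q^h_{i,j}` (of length `r' - r`, from `x_{i,j}` to `z_j^h`). -/
def qv (p : Idx n) (h : Fin t) (k : ℕ) : ExV n t r r' :=
  if h0 : k = 0 then xV n t r r' p
  else if hk : k < r' - r then qIn n t r r' p h ⟨k - 1, by omega⟩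
  else zV n t r r' p.1.2 h

/-- The graph of Example 1: the union of all the paths `P^h_{i,j}` and `Q^h_{i,j}`. -/
def ExG : SimpleGraph (ExV n t r r') :=
  SimpleGraph.fromRel fun u v => ∃ (p : Idx n) (h : Fin t) (k : ℕ),
    (k < r ∧ pv n t r r' p h k = u ∧ pv n t r r' p h (k + 1) = v) ∨
    (k < r' - r ∧ qv n t r r' p h k = u ∧ qv n t r r' p h (k + 1) = v)

namespace SimpleGraph

variable {V : Type*} {G : SimpleGraph V}

theorem Walk.le_add_length_of_adj {f : V → ℕ} (hf : ∀ ⦃u v⦄, G.Adj u v → f v ≤ f u + 1)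
    {u v : V} (w : G.Walk u v) : f v ≤ f u + w.length := by
  induction w with
  | nil => simp
  | cons hadj w ih => have := hf hadj; rw [Walk.length_cons]; omega

theorem Walk.IsPath.end_mem_of_adj_closed {S : Set V} {P : V → Prop}
    (hS : ∀ a ∈ S, P a → ∀ b, G.Adj a b → b ∈ S) {u y : V} {w : G.Walk u y} (hw : w.IsPath)
    (hu : u ∈ S) (hP : ∀ z ∈ w.support, z ≠ y → P z) : y ∈ S := by
  induction w with
  | nil => exact hu
  | @cons u v y hadj w ih =>
    have huy : u ≠ y := by
      rintro rfl
      exact ((Walk.cons_isPath_iff _ _).1 hw).2 w.end_mem_support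
    exact ih hw.of_cons (hS u hu (hP u (by simp) huy) v hadj) fun z hz => hP z (by simp [hz])

theorem Walk.IsPath.exists_eq_and_mem_support_of_segment (f : ℕ → V) {L : ℕ}
    (hnbr : ∀ m, 0 < m → m < L → ∀ v, G.Adj (f m) v → v = f (m - 1) ∨ v = f (m + 1))
    {a : ℕ} {y : V} {w : G.Walk (f a) y} (hw : w.IsPath) (ha : a ≤ L)
    (hends : ∀ z ∈ w.support, z ≠ y → z ≠ f 0 ∧ z ≠ f L) :
    ∃ b ≤ L, y = f b ∧ ∀ c, min a b ≤ c → c ≤ max a b → f c ∈ w.support := by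
  suffices ∀ {u} (w : G.Walk u y), w.IsPath → ∀ a ≤ L, u = f a →
      (∀ z ∈ w.support, z ≠ y → z ≠ f 0 ∧ z ≠ f L) →
      ∃ b ≤ L, y = f b ∧ ∀ c, min a b ≤ c → c ≤ max a b → f c ∈ w.support from
    this w hw a ha rfl hends
  clear hends ha hw w a
  intro u w
  induction w with
  | nil =>
    rintro - a ha rfl -
    exact ⟨a, ha, rfl, fun c h₁ h₂ => by simp [show c = a by omega]⟩
  | @cons u v y hadj w ih =>
    rintro hw a ha rfl hends
    have huy : f a ≠ y := by
      rintro rfl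
      exact ((Walk.cons_isPath_iff _ _).1 hw).2 w.end_mem_support
    obtain ⟨hne₀, hneL⟩ := hends (f a) (by simp) huy
    have ha₀ : 0 < a := Nat.pos_of_ne_zero fun h => hne₀ (h ▸ rfl)
    have haL : a < L := lt_of_le_of_ne ha fun h => hneL (h ▸ rfl)
    obtain ⟨a', ha', rfl, hstep⟩ : ∃ a' ≤ L, v = f a' ∧ (a' + 1 = a ∨ a' = a + 1) := by
      rcases hnbr a ha₀ haL v hadj with rfl | rfl
      exacts [⟨a - 1, by omega, rfl, by omega⟩, ⟨a + 1, by omega, rfl, by omega⟩]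
    obtain ⟨b, hb, rfl, hbetween⟩ :=
      ih hw.of_cons a' ha' rfl fun z hz => hends z (by simp [hz])
    refine ⟨b, hb, rfl, fun c h₁ h₂ => ?_⟩
    rcases eq_or_ne c a with rfl | hca
    · simp
    · exact List.mem_cons_of_mem _ (hbetween c (by omega) (by omega))

end SimpleGraph

section StrongReach

variable {V : Type*} {G : SimpleGraph V} (σ : LinearOrder V) {r : ℕ}

theorem sreach_subset_of_adj_closed {x : V} {S : Set V} (hx : x ∈ S)
    (hS : ∀ a ∈ S, σ.le x a → ∀ b, G.Adj a b → b ∈ S) : sreach G σ.le r x ⊆ S :=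
  fun _ ⟨_, _, hw, _, hP⟩ => hw.end_mem_of_adj_closed hS hx hP

theorem exists_eq_of_mem_sreach_of_segment (f : ℕ → V) {L : ℕ} (hinj : Set.InjOn f (Set.Iic L))
    (hnbr : ∀ m, 0 < m → m < L → ∀ v, G.Adj (f m) v → v = f (m - 1) ∨ v = f (m + 1))
    {a : ℕ} (haL : a < L) (h₀ : σ.lt (f 0) (f a)) (hL : σ.lt (f L) (f a))
    {y : V} (hy : y ∈ sreach G σ.le r (f a)) :
    ∃ b ≤ L, y = f b ∧ ∀ c, min a b ≤ c → c ≤ max a b → c ≠ b → σ.le (f a) (f c) := by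
  let _ := σ
  obtain ⟨-, w, hw, -, hP⟩ := hy
  have hends : ∀ z ∈ w.support, z ≠ y → z ≠ f 0 ∧ z ≠ f L := fun z hz hzy =>
    ⟨fun h => (h ▸ h₀).not_ge (hP z hz hzy), fun h => (h ▸ hL).not_ge (hP z hz hzy)⟩
  obtain ⟨b, hb, rfl, hbetween⟩ := hw.exists_eq_and_mem_support_of_segment f hnbr haL.le hends
  exact ⟨b, hb, rfl, fun c h₁ h₂ hcb => hP _ (hbetween c h₁ h₂)
    fun h => hcb (hinj (Set.mem_Iic.2 (by omega)) hb h)⟩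

theorem card_sreach_le_three_of_segment (f : ℕ → V) {L : ℕ} (hinj : Set.InjOn f (Set.Iic L))
    (hnbr : ∀ m, 0 < m → m < L → ∀ v, G.Adj (f m) v → v = f (m - 1) ∨ v = f (m + 1))
    {a : ℕ} (haL : a < L) (h₀ : σ.lt (f 0) (f a)) (hL : σ.lt (f L) (f a)) :
    Nat.card (sreach G σ.le r (f a)) ≤ 3 := by
  let _ := σ
  set R := sreach G σ.le r (f a)
  have hsegment := fun y (hy : y ∈ R) =>
    exists_eq_of_mem_sreach_of_segment σ f hinj hnbr haL h₀ hL hy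
  set T : Set ℕ := {b | b ≤ L ∧ f b ∈ R}
  have hT : T.Finite := (Set.finite_Iic L).subset fun b hb => hb.1
  have hRT : R ⊆ f '' T := fun y hy => by
    obtain ⟨b, hb, rfl, -⟩ := hsegment y hy
    exact ⟨b, ⟨hb, hy⟩, rfl⟩
  -- two members of `R` on the same side of `f a`: the path to the farther one passes the nearer
  have hside : ∀ b ∈ T, ∀ c ∈ T, min a b < c → c < max a b → False := by
    rintro b ⟨hb, hbR⟩ c ⟨hc, hcR⟩ h₁ h₂
    obtain ⟨b', hb', hbb', hbetween⟩ := hsegment _ hbR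
    obtain rfl := hinj hb hb' hbb'
    have hca : f c = f a := le_antisymm hcR.1 (hbetween c h₁.le h₂.le (by omega))
    have := hinj hc haL.le hca
    omega
  have hcompare : Set.InjOn (fun b => compare b a) T := by
    intro b hb c hc hbc
    wlog hlt : b < c generalizing b c
    · rcases lt_or_eq_of_le (not_lt.1 hlt) with h | h
      exacts [(this hc hb hbc.symm h).symm, h.symm]
    simp only at hbc
    rcases lt_trichotomy c a with h | rfl | h
    · exact (hside b hb c hc (by omega) (by omega)).elim
    · exact absurd (compare_eq_iff_eq.1 (hbc.trans (compare_eq_iff_eq.2 rfl))) hlt.ne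
    · have := compare_gt_iff_gt.1 (hbc.trans (compare_gt_iff_gt.2 h))
      exact (hside c hc b hb (by omega) (by omega)).elim
  calc Nat.card R = R.ncard := Nat.card_coe_set_eq R
    _ ≤ (f '' T).ncard := Set.ncard_le_ncard hRT (hT.image f)
    _ ≤ T.ncard := Set.ncard_image_le hT
    _ ≤ (Set.univ : Set Ordering).ncard :=
      Set.ncard_le_ncard_of_injOn _ (fun _ _ => Set.mem_univ _) hcompare
    _ = 3 := by rw [Set.ncard_univ, Nat.card_eq_fintype_card]; rfl

end StrongReach

section ExampleGraph

variable {n t r r' : ℕ}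

namespace ExG

theorem adj_cases {u v : ExV n t r r'} (hadj : (ExG n t r r').Adj u v) :
    ∃ (p : Idx n) (h : Fin t) (k : ℕ),
      (k < r ∧ ((pv n t r r' p h k = u ∧ pv n t r r' p h (k + 1) = v) ∨
        (pv n t r r' p h k = v ∧ pv n t r r' p h (k + 1) = u))) ∨
      (k < r' - r ∧ ((qv n t r r' p h k = u ∧ qv n t r r' p h (k + 1) = v) ∨
        (qv n t r r' p h k = v ∧ qv n t r r' p h (k + 1) = u))) := by
  obtain ⟨-, ⟨p, h, k, hk⟩ | ⟨p, h, k, hk⟩⟩ := (SimpleGraph.fromRel_adj _ _ _).1 hadj <;>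
    exact ⟨p, h, k, by tauto⟩

theorem adj_pv_of_lt {p : Idx n} {h : Fin t} {m : ℕ} (hm₀ : 0 < m) (hm : m < r)
    {v : ExV n t r r'} (hadj : (ExG n t r r').Adj (pv n t r r' p h m) v) :
    v = pv n t r r' p h (m - 1) ∨ v = pv n t r r' p h (m + 1) := by
  obtain ⟨q, g, k, ⟨hk, ⟨h₁, rfl⟩ | ⟨rfl, h₂⟩⟩ | ⟨hk, ⟨h₁, rfl⟩ | ⟨rfl, h₂⟩⟩⟩ :=
    adj_cases hadj <;> clear hadj <;> simp only [pv, qv, zV, xV, pIn, qIn] at * <;>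
    split_ifs at * <;>
    simp only [Sum.inl.injEq, Sum.inr.injEq, Prod.mk.injEq, Fin.mk.injEq, reduceCtorEq] at * <;>
    grind

theorem adj_qv_of_lt {p : Idx n} {h : Fin t} {m : ℕ} (hm₀ : 0 < m) (hm : m < r' - r)
    {v : ExV n t r r'} (hadj : (ExG n t r r').Adj (qv n t r r' p h m) v) :
    v = qv n t r r' p h (m - 1) ∨ v = qv n t r r' p h (m + 1) := by
  obtain ⟨q, g, k, ⟨hk, ⟨h₁, rfl⟩ | ⟨rfl, h₂⟩⟩ | ⟨hk, ⟨h₁, rfl⟩ | ⟨rfl, h₂⟩⟩⟩ :=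
    adj_cases hadj <;> clear hadj <;> simp only [pv, qv, zV, xV, pIn, qIn] at * <;>
    split_ifs at * <;>
    simp only [Sum.inl.injEq, Sum.inr.injEq, Prod.mk.injEq, Fin.mk.injEq, reduceCtorEq] at * <;>
    grind

end ExG

theorem pv_injOn (p : Idx n) (h : Fin t) : Set.InjOn (pv n t r r' p h) (Set.Iic r) := by
  intro m hm m' hm' he
  simp only [Set.mem_Iic, pv, zV, xV, pIn] at hm hm' he
  split_ifs at he <;> simp_all <;> omega

theorem qv_injOn (p : Idx n) (h : Fin t) : Set.InjOn (qv n t r r' p h) (Set.Iic (r' - r)) := by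
  intro m hm m' hm' he
  simp only [Set.mem_Iic, qv, zV, xV, qIn] at hm hm' he
  split_ifs at he <;> simp_all <;> omega

theorem pv_val_add_one (p : Idx n) (h : Fin t) (k : Fin (r - 1)) :
    pv n t r r' p h (k + 1) = pIn n t r r' p h k := by
  simp [pv, show (k : ℕ) + 1 < r by omega]

theorem qv_val_add_one (p : Idx n) (h : Fin t) (k : Fin (r' - r - 1)) :
    qv n t r r' p h (k + 1) = qIn n t r r' p h k := by
  simp [qv, show (k : ℕ) + 1 < r' - r by omega]

theorem ncard_range_zV_le (i : Fin n) : (Set.range (zV n t r r' i)).ncard ≤ t := by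
  rw [← Nat.card_coe_set_eq]
  exact (Finite.card_range_le _).trans (by simp)

/-- The vertices of the paths `P_p^h` and `Q_p^h`, `h ∈ [t]`. -/
def spokes (p : Idx n) : Set (ExV n t r r') := {v | match v with
  | Sum.inl (a, _) => a = p.1.1 ∨ a = p.1.2
  | Sum.inr (Sum.inl q) => q = p
  | Sum.inr (Sum.inr (Sum.inl (q, _))) => q = p
  | Sum.inr (Sum.inr (Sum.inr (q, _))) => q = p}

theorem ExG.mem_spokes_of_mem_of_adj {p : Idx n} {a b : ExV n t r r'} (ha : a ∈ spokes p)
    (haZ : ∀ c, a ≠ Sum.inl c) (hadj : (ExG n t r r').Adj a b) : b ∈ spokes p := by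
  obtain ⟨q, g, k, ⟨hk, ⟨rfl, rfl⟩ | ⟨rfl, rfl⟩⟩ | ⟨hk, ⟨rfl, rfl⟩ | ⟨rfl, rfl⟩⟩⟩ :=
    adj_cases hadj <;> clear hadj <;>
    simp only [pv, qv, zV, xV, pIn, qIn] at * <;> split_ifs at * <;> simp_all [spokes]

def layer : ExV n t r r' → ℕ
  | Sum.inl _ => 0
  | Sum.inr (Sum.inl _) => 1
  | Sum.inr (Sum.inr _) => 2

/-- `Z <_σ X <_σ Y`. -/
def LayersOrdered (σ : LinearOrder (ExV n t r r')) : Prop :=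
  ∀ u v, layer u < layer v → σ.lt u v

theorem LayersOrdered.not_le {σ : LinearOrder (ExV n t r r')} (hσ : LayersOrdered σ)
    {u v : ExV n t r r'} (huv : layer u < layer v) : ¬ σ.le v u :=
  ((σ.lt_iff_le_not_ge u v).1 (hσ u v huv)).2

theorem layersOrdered_of_lt {σ : LinearOrder (ExV n t r r')}
    (hZX : ∀ (a : Fin n × Fin t) (p : Idx n), σ.lt (Sum.inl a) (xV n t r r' p))
    (hXY : ∀ (p : Idx n) (w : (Idx n × Fin t × Fin (r - 1)) ⊕ (Idx n × Fin t × Fin (r' - r - 1))),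
      σ.lt (xV n t r r' p) (Sum.inr (Sum.inr w))) :
    LayersOrdered σ := by
  -- `ExV` also carries Mathlib's order on sum types; `σ` is the one meant here
  let _ : Preorder (ExV n t r r') := σ.toPreorder
  intro u v huv
  rcases u with a | p | _ <;> rcases v with _ | q | w <;> simp only [layer] at huv <;> try omega
  · exact hZX a q
  · exact (hZX a (w.elim Prod.fst Prod.fst)).trans (hXY _ w)
  · exact hXY p w

theorem card_sreach_xV_le {σ : LinearOrder (ExV n t r r')} (hσ : LayersOrdered σ) (p : Idx n) :
    Nat.card (sreach (ExG n t r r') σ.le r (xV n t r r' p)) ≤ 2 * t + 1 := by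
  have hspokes : sreach (ExG n t r r') σ.le r (xV n t r r' p) ⊆ spokes p :=
    sreach_subset_of_adj_closed σ (show xV n t r r' p ∈ spokes p from rfl)
      fun a ha hxa b hab => ExG.mem_spokes_of_mem_of_adj ha
        (fun c hc => hσ.not_le (u := Sum.inl c) (by simp [layer, xV]) (hc ▸ hxa)) hab
  have hsub : sreach (ExG n t r r') σ.le r (xV n t r r' p) ⊆
      insert (xV n t r r' p) (Set.range (zV n t r r' p.1.1) ∪ Set.range (zV n t r r' p.1.2)) := by
    intro y hy
    have hy' := hspokes hy
    rcases y with ⟨a, g⟩ | q | w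
    · rcases hy' with rfl | rfl
      exacts [Or.inr (Or.inl ⟨g, rfl⟩), Or.inr (Or.inr ⟨g, rfl⟩)]
    · exact Or.inl (congrArg (Sum.inr ∘ Sum.inl) hy')
    · exact absurd hy.1 (hσ.not_le (by simp [layer, xV]))
  rw [Nat.card_coe_set_eq]
  calc _ ≤ _ := Set.ncard_le_ncard hsub (Set.toFinite _)
    _ ≤ _ + 1 := Set.ncard_insert_le _ _
    _ ≤ 2 * t + 1 := by
      have := Set.ncard_union_le (Set.range (zV n t r r' p.1.1)) (Set.range (zV n t r r' p.1.2))
      have := ncard_range_zV_le (t := t) (r := r) (r' := r') p.1.1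
      have := ncard_range_zV_le (t := t) (r := r) (r' := r') p.1.2
      omega

theorem card_sreach_pIn_le {σ : LinearOrder (ExV n t r r')} (hσ : LayersOrdered σ)
    (p : Idx n) (h : Fin t) (k : Fin (r - 1)) :
    Nat.card (sreach (ExG n t r r') σ.le r (pIn n t r r' p h k)) ≤ 3 := by
  have hk := k.isLt
  rw [← pv_val_add_one]
  exact card_sreach_le_three_of_segment σ _ (pv_injOn p h)
    (fun _ h₀ hm _ => ExG.adj_pv_of_lt h₀ hm) (by omega)
    (hσ _ _ (by rw [pv_val_add_one]; simp [layer, pv, zV, pIn]))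
    (hσ _ _ (by rw [pv_val_add_one]; simp [layer, pv, pIn, xV, show r ≠ 0 by omega]))

theorem card_sreach_qIn_le {σ : LinearOrder (ExV n t r r')} (hσ : LayersOrdered σ)
    (p : Idx n) (h : Fin t) (k : Fin (r' - r - 1)) :
    Nat.card (sreach (ExG n t r r') σ.le r (qIn n t r r' p h k)) ≤ 3 := by
  have hk := k.isLt
  rw [← qv_val_add_one]
  exact card_sreach_le_three_of_segment σ _ (qv_injOn p h)
    (fun _ h₀ hm _ => ExG.adj_qv_of_lt h₀ hm) (by omega)
    (hσ _ _ (by rw [qv_val_add_one]; simp [layer, qv, qIn, xV]))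
    (hσ _ _ (by rw [qv_val_add_one]; simp [layer, qv, qIn, zV, show r' - r ≠ 0 by omega]))

section Potential

variable (r r') (i : Fin n)

def potZ (a : Fin n) : ℕ := if a = i then 0 else r + 1

def potX (p : Idx n) : ℕ :=
  if p.1.1 = i then r else if p.1.2 = i then min (r' - r) (r + 1) else r + 1

def potP (p : Idx n) (m : ℕ) : ℕ :=
  min (r + 1) (min (potZ r i p.1.1 + m) (potX r r' i p + (r - m)))

def potQ (p : Idx n) (m : ℕ) : ℕ :=
  min (r + 1) (min (potX r r' i p + m) (potZ r i p.1.2 + (r' - r - m)))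

/-- Zero on `Z_i`, `r + 1` on the rest of `Z`, and `1`-Lipschitz (`ExG.pot_le_pot_add_one`): so no
vertex of `Z \ Z_i` is within distance `r` of `Z_i`. -/
def pot : ExV n t r r' → ℕ
  | Sum.inl (a, _) => potZ r i a
  | Sum.inr (Sum.inl p) => potX r r' i p
  | Sum.inr (Sum.inr (Sum.inl (p, _, k))) => potP r r' i p (k + 1)
  | Sum.inr (Sum.inr (Sum.inr (p, _, k))) => potQ r r' i p (k + 1)

end Potential

theorem pot_pv (hrr' : r < r') (i : Fin n) (p : Idx n) (h : Fin t) (m : ℕ) :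
    pot r r' i (pv n t r r' p h m) = potP r r' i p m := by
  have := p.2
  simp only [pv, zV, xV, pIn]
  split_ifs <;> simp only [pot, potP, potX, potZ] <;> split_ifs <;> simp_all <;> omega

theorem pot_qv (hrr' : r < r') (i : Fin n) (p : Idx n) (h : Fin t) (m : ℕ) :
    pot r r' i (qv n t r r' p h m) = potQ r r' i p m := by
  have := p.2
  simp only [qv, zV, xV, qIn]
  split_ifs <;> simp only [pot, potQ, potX, potZ] <;> split_ifs <;> simp_all <;> omega

theorem ExG.pot_le_pot_add_one (hrr' : r < r') (i : Fin n) {u v : ExV n t r r'}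
    (hadj : (ExG n t r r').Adj u v) : pot r r' i v ≤ pot r r' i u + 1 := by
  obtain ⟨p, h, k, ⟨-, ⟨rfl, rfl⟩ | ⟨rfl, rfl⟩⟩ | ⟨-, ⟨rfl, rfl⟩ | ⟨rfl, rfl⟩⟩⟩ :=
    adj_cases hadj <;> simp only [pot_pv hrr', pot_qv hrr', potP, potQ] <;> omega

theorem sreach_zV_subset (hrr' : r < r') {σ : LinearOrder (ExV n t r r')}
    (hσ : LayersOrdered σ) (i : Fin n) (g : Fin t) :
    sreach (ExG n t r r') σ.le r (zV n t r r' i g) ⊆ Set.range (zV n t r r' i) := by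
  rintro y ⟨hyz, w, -, hw, -⟩
  obtain ⟨a, g'⟩ | y := y
  · have hpot : pot r r' i (Sum.inl (a, g')) ≤ pot r r' i (zV n t r r' i g) + r :=
      (w.le_add_length_of_adj fun _ _ => ExG.pot_le_pot_add_one hrr' i).trans (by omega)
    simp only [zV, pot, potZ, if_true] at hpot
    split_ifs at hpot with hai
    · exact ⟨g', by rw [hai]; rfl⟩
    · omega
  · exact absurd hyz (hσ.not_le (by obtain _ | _ := y <;> simp [layer, zV]))

theorem card_sreach_zV_le (hrr' : r < r') {σ : LinearOrder (ExV n t r r')}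
    (hσ : LayersOrdered σ) (i : Fin n) (g : Fin t) :
    Nat.card (sreach (ExG n t r r') σ.le r (zV n t r r' i g)) ≤ t := by
  rw [Nat.card_coe_set_eq]
  exact (Set.ncard_le_ncard (sreach_zV_subset hrr' hσ i g)).trans (ncard_range_zV_le i)

end ExampleGraph

theorem example1_claim1 (hrr' : r < r')
    (σ : LinearOrder (ExV n t r r'))
    (hZX : ∀ (a : Fin n × Fin t) (p : Idx n), σ.lt (Sum.inl a) (xV n t r r' p))
    (hXY : ∀ (p : Idx n) (w : (Idx n × Fin t × Fin (r - 1)) ⊕ (Idx n × Fin t × Fin (r' - r - 1))),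
      σ.lt (xV n t r r' p) (Sum.inr (Sum.inr w))) :
    scolOn (ExG n t r r') σ.le r ≤ 2 * t + 1 := by
  have hσ := layersOrdered_of_lt hZX hXY
  refine Finset.sup_le fun x _ => ?_
  rcases x with ⟨i, g⟩ | p | ⟨p, h, k⟩ | ⟨p, h, k⟩
  · exact (card_sreach_zV_le hrr' hσ i g).trans (by omega)
  · exact card_sreach_xV_le hσ p
  · exact (card_sreach_pIn_le hσ p h k).trans (by have := h.pos; omega)
  · exact (card_sreach_qIn_le hσ p h k).trans (by have := h.pos; omega)
end

section
/- In the graph G of Example 1 (parameters n ≥ t ≥ 4, r < r'): for every ordering σ of G, either scol_r(G,σ) ≥ 0.246·n or scol_{r'}(G,σ) ≥ 0.754·n·t. -/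
open SimpleGraph

variable (n t r r' : ℕ)

section AuxWalk
variable {V : Type*} {G : SimpleGraph V}

def chainWalk (G : SimpleGraph V) (f : ℕ → V) : ∀ m, (∀ k, k < m → G.Adj (f k) (f (k+1))) → G.Walk (f 0) (f m)
  | 0, _ => Walk.nil
  | m+1, h => (chainWalk G f m fun k hk => h k (Nat.lt_succ_of_lt hk)).concat (h m (Nat.lt_succ_self m))

lemma chainWalk_length (f : ℕ → V) (m : ℕ) (h : ∀ k, k < m → G.Adj (f k) (f (k+1))) :
    (chainWalk G f m h).length = m := by
  induction m with
  | zero => rfl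
  | succ m ih => simp [chainWalk, Walk.length_concat, ih]

lemma chainWalk_support (f : ℕ → V) (m : ℕ) (h : ∀ k, k < m → G.Adj (f k) (f (k+1)))
    {y : V} (hy : y ∈ (chainWalk G f m h).support) : ∃ k ≤ m, f k = y := by
  induction m with
  | zero => simp [chainWalk] at hy; exact ⟨0, le_refl _, hy.symm⟩
  | succ m ih =>
      simp only [chainWalk, Walk.support_concat, List.concat_eq_append, List.mem_append,
        List.mem_singleton] at hy
      rcases hy with hy | hy
      · obtain ⟨k, hk, hfk⟩ := ih _ hy
        exact ⟨k, by omega, hfk⟩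
      · exact ⟨m+1, le_refl _, hy.symm⟩

lemma exists_first_prefix {G : SimpleGraph V} (P : V → Prop) :
    ∀ {a u : V} (w : G.Walk a u), (∃ z ∈ w.support, P z) →
    ∃ y, P y ∧ y ∈ w.support ∧ ∃ w' : G.Walk a y, w'.length ≤ w.length ∧
      ∀ z ∈ w'.support, z ≠ y → ¬ P z := by
  intro a u w
  induction w with
  | nil =>
      rintro ⟨z, hz, hP⟩
      simp only [Walk.support_nil, List.mem_singleton] at hz
      subst hz
      exact ⟨z, hP, by simp, Walk.nil, le_refl _, by simp⟩
  | @cons a b u h w ih =>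
      rintro ⟨z, hz, hP⟩
      by_cases hPa : P a
      · exact ⟨a, hPa, by simp, Walk.nil, by simp, by simp⟩
      · have hzw : z ∈ w.support := by
          simp only [Walk.support_cons, List.mem_cons] at hz
          rcases hz with rfl | hz
          · exact absurd hP hPa
          · exact hz
        obtain ⟨y, hPy, hysupp, w', hlen, hprop⟩ := ih ⟨z, hzw, hP⟩
        refine ⟨y, hPy, by simp [hysupp], Walk.cons h w', by simpa using Nat.succ_le_succ hlen, ?_⟩
        intro v hv hne
        simp only [Walk.support_cons, List.mem_cons] at hv
        rcases hv with rfl | hv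
        · exact hPa
        · exact hprop v hv hne

lemma sreach_of_walk (G : SimpleGraph V) (σ : LinearOrder V) {x u : V} (w : G.Walk x u)
    {r : ℕ} (hlen : w.length ≤ r) (hex : ∃ z ∈ w.support, ¬ σ.le x z) :
    ∃ y, y ∈ sreach G σ.le r x ∧ y ∈ w.support ∧ ¬ σ.le x y := by
  obtain ⟨y, hPy, hysupp, w', hlen', hprop⟩ := exists_first_prefix (fun z => ¬ σ.le x z) w hex
  refine ⟨y, ⟨(σ.le_total x y).resolve_left hPy, w'.bypass, w'.bypass_isPath, ?_, ?_⟩, hysupp, hPy⟩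
  · exact le_trans w'.length_bypass_le (le_trans hlen' hlen)
  · intro z hz hne
    have := hprop z (w'.support_bypass_subset hz) hne
    exact of_not_not this

end AuxWalk

lemma adj_pv (p : Idx n) (h : Fin t) {k : ℕ} (hk : k < r) :
    (ExG n t r r').Adj (pv n t r r' p h k) (pv n t r r' p h (k+1)) := by
  rw [ExG, fromRel_adj]
  refine ⟨?_, Or.inl ⟨p, h, k, Or.inl ⟨hk, rfl, rfl⟩⟩⟩
  unfold pv zV pIn xV
  split_ifs <;> simp_all [Fin.ext_iff] <;> omega

lemma adj_qv (p : Idx n) (h : Fin t) {k : ℕ} (hk : k < r' - r) :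
    (ExG n t r r').Adj (qv n t r r' p h k) (qv n t r r' p h (k+1)) := by
  rw [ExG, fromRel_adj]
  refine ⟨?_, Or.inl ⟨p, h, k, Or.inr ⟨hk, rfl, rfl⟩⟩⟩
  unfold qv zV qIn xV
  split_ifs <;> simp_all [Fin.ext_iff] <;> omega

lemma pv_zero (p : Idx n) (h : Fin t) : pv n t r r' p h 0 = zV n t r r' p.1.1 h := by
  simp [pv]

lemma pv_last (p : Idx n) (h : Fin t) (hr : 1 ≤ r) : pv n t r r' p h r = xV n t r r' p := by
  simp [pv]; omega

lemma qv_zero (p : Idx n) (h : Fin t) : qv n t r r' p h 0 = xV n t r r' p := by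
  simp [qv]

lemma qv_last (p : Idx n) (h : Fin t) (hrr' : r < r') :
    qv n t r r' p h (r' - r) = zV n t r r' p.1.2 h := by
  simp [qv]; omega

/-- The path `P^h_{i,j}` as a walk from `z` to `x`. -/
def Pwalk (p : Idx n) (h : Fin t) (hr : 1 ≤ r) :
    (ExG n t r r').Walk (zV n t r r' p.1.1 h) (xV n t r r' p) :=
  (chainWalk _ (pv n t r r' p h) r (fun _ hk => adj_pv n t r r' p h hk)).copy
    (pv_zero n t r r' p h) (pv_last n t r r' p h hr)

def Qwalk (p : Idx n) (h : Fin t) (hrr' : r < r') :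
    (ExG n t r r').Walk (xV n t r r' p) (zV n t r r' p.1.2 h) :=
  (chainWalk _ (qv n t r r' p h) (r' - r) (fun _ hk => adj_qv n t r r' p h hk)).copy
    (qv_zero n t r r' p h) (qv_last n t r r' p h hrr')

lemma Pwalk_length (p : Idx n) (h : Fin t) (hr : 1 ≤ r) :
    (Pwalk n t r r' p h hr).length = r := by
  simp [Pwalk, chainWalk_length]

lemma Qwalk_length (p : Idx n) (h : Fin t) (hrr' : r < r') :
    (Qwalk n t r r' p h hrr').length = r' - r := by
  simp [Qwalk, chainWalk_length]

lemma Pwalk_support (p : Idx n) (h : Fin t) (hr : 1 ≤ r) {y : ExV n t r r'}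
    (hy : y ∈ (Pwalk n t r r' p h hr).support) : ∃ k ≤ r, pv n t r r' p h k = y := by
  rw [Pwalk, Walk.support_copy] at hy
  exact chainWalk_support _ _ _ hy

lemma Qwalk_support (p : Idx n) (h : Fin t) (hrr' : r < r') {y : ExV n t r r'}
    (hy : y ∈ (Qwalk n t r r' p h hrr').support) : ∃ k ≤ r' - r, qv n t r r' p h k = y := by
  rw [Qwalk, Walk.support_copy] at hy
  exact chainWalk_support _ _ _ hy

lemma card_add_one_le {α β γ : Type*} [Fintype α] (s : Finset β) (S : Set α) (gg : α → Option γ)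
    (c : β → γ) (z : α) (hz : z ∈ S) (hgz : ∀ b ∈ s, gg z ≠ some (c b))
    (hc : ∀ b ∈ s, ∃ y ∈ S, gg y = some (c b))
    (hinj : ∀ b1 ∈ s, ∀ b2 ∈ s, c b1 = c b2 → b1 = b2) :
    s.card + 1 ≤ Nat.card S := by
  classical
  have hfin : S.Finite := Set.toFinite S
  set F : β → α := fun b => if h : ∃ y ∈ S, gg y = some (c b) then h.choose else z with hF
  have hFmem : ∀ b ∈ s, F b ∈ S ∧ gg (F b) = some (c b) := by
    intro b hb
    have h := hc b hb
    simp only [hF, dif_pos h]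
    exact ⟨h.choose_spec.1, h.choose_spec.2⟩
  have hzim : z ∉ s.image F := by
    simp only [Finset.mem_image, not_exists]
    rintro b ⟨hb, hbz⟩
    exact hgz b hb (hbz ▸ (hFmem b hb).2)
  have hinjF : Set.InjOn F s := by
    intro b1 hb1 b2 hb2 he
    have h1 := (hFmem b1 hb1).2
    have h2 := (hFmem b2 hb2).2
    rw [he, h2] at h1
    exact hinj b1 hb1 b2 hb2 (Option.some_injective _ h1.symm)
  have hsub : insert z (s.image F) ⊆ hfin.toFinset := by
    intro y hy
    rw [Finset.mem_insert] at hy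
    rcases hy with rfl | hy
    · exact hfin.mem_toFinset.2 hz
    · obtain ⟨b, hb, rfl⟩ := Finset.mem_image.1 hy
      exact hfin.mem_toFinset.2 (hFmem b hb).1
  have hcard : (insert z (s.image F)).card = s.card + 1 := by
    rw [Finset.card_insert_of_notMem hzim, Finset.card_image_of_injOn hinjF]
  calc s.card + 1 = (insert z (s.image F)).card := hcard.symm
    _ ≤ hfin.toFinset.card := Finset.card_le_card hsub
    _ = S.ncard := (Set.ncard_eq_toFinset_card S hfin).symm
    _ = Nat.card S := (Nat.card_coe_set_eq S).symm

def gB : ExV n t r r' → Option (Fin n)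
  | Sum.inr (Sum.inl q) => some q.1.2
  | Sum.inr (Sum.inr (Sum.inl (q, _, _))) => some q.1.2
  | _ => none

def gG : ExV n t r r' → Option (Fin n × Fin t)
  | Sum.inl (j, h) => some (j, h)
  | Sum.inr (Sum.inr (Sum.inr (q, h, _))) => some (q.1.2, h)
  | _ => none

example (i : Fin n) (h : Fin t) : gB n t r r' (zV n t r r' i h) = none := rfl
example (q : Idx n) : gB n t r r' (xV n t r r' q) = some q.1.2 := rfl
example (q : Idx n) (h : Fin t) (k : Fin (r-1)) : gB n t r r' (pIn n t r r' q h k) = some q.1.2 := rfl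
example (i : Fin n) (h : Fin t) : gG n t r r' (zV n t r r' i h) = some (i, h) := rfl
example (q : Idx n) (h : Fin t) (k : Fin (r'-r-1)) : gG n t r r' (qIn n t r r' q h k) = some (q.1.2, h) := rfl

lemma bad_extract (hr : 1 ≤ r) (σ : LinearOrder (ExV n t r r'))
    (i : Fin n) (h : Fin t) (j : Fin n) (hj : i ≠ j)
    (hbad : ∃ y ∈ (Pwalk n t r r' ⟨(i,j), hj⟩ h hr).support, ¬ σ.le (zV n t r r' i h) y) :
    ∃ y ∈ sreach (ExG n t r r') σ.le r (zV n t r r' i h), gB n t r r' y = some j := by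
  obtain ⟨y, hyS, hysupp, hylt⟩ := sreach_of_walk _ σ (Pwalk n t r r' ⟨(i,j), hj⟩ h hr)
    (le_of_eq (Pwalk_length n t r r' _ h hr)) hbad
  refine ⟨y, hyS, ?_⟩
  obtain ⟨k, hk, rfl⟩ := Pwalk_support n t r r' _ h hr hysupp
  rcases Nat.eq_zero_or_pos k with rfl | hk0
  · exact absurd (by rw [pv_zero]; exact σ.le_refl _) hylt
  · rw [pv, dif_neg (by omega)]
    split_ifs with hkr
    · rfl
    · rfl

lemma good_extract (hr : 1 ≤ r) (hrr' : r < r') (σ : LinearOrder (ExV n t r r'))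
    (i : Fin n) (h : Fin t)
    (hm : ∀ j' h', σ.le (zV n t r r' j' h') (zV n t r r' i h))
    (j : Fin n) (hj : i ≠ j) (h' : Fin t)
    (hgood : ∀ y ∈ (Pwalk n t r r' ⟨(i,j), hj⟩ h hr).support, σ.le (zV n t r r' i h) y) :
    ∃ y ∈ sreach (ExG n t r r') σ.le r' (zV n t r r' i h), gG n t r r' y = some (j, h') := by
  set q : Idx n := (⟨(i,j), hj⟩ : Idx n) with hq
  set z := zV n t r r' i h with hz
  set W := (Pwalk n t r r' q h hr).append (Qwalk n t r r' q h' hrr') with hW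
  have hne : zV n t r r' j h' ≠ z := by
    rw [hz]; simp only [zV, Sum.inl.injEq, Prod.mk.injEq, ne_eq, not_and]
    intro e; exact absurd e.symm hj
  have hlt : ¬ σ.le z (zV n t r r' j h') := fun hle =>
    hne (σ.le_antisymm _ _ (hm j h') hle)
  have hlen : W.length ≤ r' := by
    rw [hW, Walk.length_append, Pwalk_length, Qwalk_length]; omega
  obtain ⟨y, hyS, hysupp, hylt⟩ := sreach_of_walk _ σ W hlen ⟨_, W.end_mem_support, hlt⟩
  refine ⟨y, hyS, ?_⟩
  rw [hW, Walk.mem_support_append_iff] at hysupp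
  rcases hysupp with hy | hy
  · exact absurd (hgood y hy) hylt
  · obtain ⟨k, hk, rfl⟩ := Qwalk_support n t r r' q h' hrr' hy
    rcases Nat.eq_zero_or_pos k with rfl | hk0
    · exact absurd (by rw [qv_zero]; exact hgood _ (Walk.end_mem_support _)) hylt
    · rw [qv, dif_neg (by omega)]
      split_ifs with hkr
      · rfl
      · rfl

/-- Claim 3 of Example 1: for every ordering `σ`, either
`scol_r(G, σ) ≥ 0.246 n` or `scol_{r'}(G, σ) ≥ 0.754 n t`. -/
theorem example1_claim3 (ht : 4 ≤ t) (htn : t ≤ n) (hr : 1 ≤ r) (hrr' : r < r')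
    (σ : LinearOrder (ExV n t r r')) :
    (0.246 : ℝ) * n ≤ (scolOn (ExG n t r r') σ.le r : ℝ) ∨
    (0.754 : ℝ) * n * t ≤ (scolOn (ExG n t r r') σ.le r' : ℝ) := by
  classical
  have hn : 4 ≤ n := le_trans ht htn
  obtain ⟨m, -, hm⟩ := @Finset.exists_max_image (ExV n t r r') (Fin n × Fin t) σ Finset.univ
      (fun q => zV n t r r' q.1 q.2) ⟨(⟨0, by omega⟩, ⟨0, by omega⟩), Finset.mem_univ _⟩
  obtain ⟨i, h⟩ := m
  set z := zV n t r r' i h with hz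
  have hmax : ∀ j' h', σ.le (zV n t r r' j' h') z := fun j' h' => hm (j', h') (Finset.mem_univ _)
  set Bad : Fin n → Prop := fun j =>
    ∃ hj : i ≠ j, ∃ y ∈ (Pwalk n t r r' ⟨(i,j), hj⟩ h hr).support, ¬ σ.le z y with hBad
  set bs : Finset (Fin n) := (Finset.univ.erase i).filter Bad with hbs
  set gs : Finset (Fin n) := (Finset.univ.erase i).filter (fun j => ¬ Bad j) with hgs
  have hsplit : bs.card + gs.card = n - 1 := by
    rw [hbs, hgs, Finset.card_filter_add_card_filter_not,
      Finset.card_erase_of_mem (Finset.mem_univ i), Finset.card_univ, Fintype.card_fin]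
  have hzS : ∀ m : ℕ, z ∈ sreach (ExG n t r r') σ.le m z := by
    intro m
    refine ⟨σ.le_refl z, Walk.nil, Walk.IsPath.nil, Nat.zero_le m, ?_⟩
    intro w hw hne
    simp only [Walk.support_nil, List.mem_singleton] at hw
    exact absurd hw hne
  have cardB : bs.card + 1 ≤ Nat.card (sreach (ExG n t r r') σ.le r z) := by
    refine card_add_one_le bs _ (gB n t r r') id z (hzS r) ?_ ?_ ?_
    · intro b _ hcon
      have : (none : Option (Fin n)) = some b := hcon
      simp at this
    · intro j hjmem
      rw [hbs, Finset.mem_filter] at hjmem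
      obtain ⟨hj, hbad⟩ := hjmem.2
      exact bad_extract n t r r' hr σ i h j hj hbad
    · exact fun b1 _ b2 _ e => e
  have cardG : gs.card * t + 1 ≤ Nat.card (sreach (ExG n t r r') σ.le r' z) := by
    have key := card_add_one_le (gs ×ˢ (Finset.univ : Finset (Fin t)))
      (sreach (ExG n t r r') σ.le r' z) (gG n t r r') id z (hzS r') ?_ ?_ ?_
    · rwa [Finset.card_product, Finset.card_univ, Fintype.card_fin] at key
    · rintro ⟨j, h'⟩ hb hcon
      rw [Finset.mem_product, hgs, Finset.mem_filter, Finset.mem_erase] at hb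
      have he : (i, h) = (j, h') := Option.some_injective _ hcon
      exact hb.1.1.1 (congrArg Prod.fst he).symm
    · rintro ⟨j, h'⟩ hb
      rw [Finset.mem_product, hgs, Finset.mem_filter, Finset.mem_erase] at hb
      obtain ⟨⟨⟨hji, -⟩, hnb⟩, -⟩ := hb
      have hj : i ≠ j := hji.symm
      have hgood : ∀ y ∈ (Pwalk n t r r' ⟨(i,j), hj⟩ h hr).support, σ.le z y := by
        intro y hy
        by_contra hcon
        exact hnb ⟨hj, y, hy, hcon⟩
      exact good_extract n t r r' hr hrr' σ i h hmax j hj h' hgood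
    · exact fun b1 _ b2 _ e => e
  have hscr : Nat.card (sreach (ExG n t r r') σ.le r z) ≤ scolOn (ExG n t r r') σ.le r :=
    Finset.le_sup (f := fun x => Nat.card (sreach (ExG n t r r') σ.le r x)) (Finset.mem_univ z)
  have hscr' : Nat.card (sreach (ExG n t r r') σ.le r' z) ≤ scolOn (ExG n t r r') σ.le r' :=
    Finset.le_sup (f := fun x => Nat.card (sreach (ExG n t r r') σ.le r' x)) (Finset.mem_univ z)
  by_cases hcase : (0.246 : ℝ) * n ≤ ((bs.card + 1 : ℕ) : ℝ)
  · left
    calc (0.246:ℝ) * n ≤ ((bs.card + 1 : ℕ) : ℝ) := hcase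
      _ ≤ _ := Nat.cast_le.2 (le_trans cardB hscr)
  · right
    push_neg at hcase
    have h1 : (bs.card : ℝ) + 1 < 0.246 * n := by push_cast at hcase; linarith
    have h2 : (gs.card : ℝ) = (n:ℝ) - 1 - bs.card := by
      have e1 := congrArg (Nat.cast : ℕ → ℝ) hsplit
      push_cast [Nat.cast_sub (by omega : 1 ≤ n)] at e1
      linarith
    have h3 : (0.754:ℝ) * n ≤ gs.card := by linarith
    have h4 : gs.card * t ≤ scolOn (ExG n t r r') σ.le r' := le_trans (by omega) hscr'
    calc (0.754:ℝ) * n * t ≤ (gs.card : ℝ) * t :=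
          mul_le_mul_of_nonneg_right h3 (by positivity)
      _ = ((gs.card * t : ℕ) : ℝ) := by push_cast; ring
      _ ≤ _ := Nat.cast_le.2 h4
end
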